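/- arXiv:2111.06169 — 3 statements merged into one kernel-verified Lean document; each statement's English description precedes it below -/
import Mathlib

section
/- Let c be a simple-model cost function on the infinite grid graph G with l layers, and let r = (x_r, y_r, z_r) and s = (x_s, y_s, z_s) be vertices of G. For z ∈ {1, …, l} let d_z := dist_{(G,c)}(r, (x_s, y_r, z)) and e_z := dist_{(G,c)}(s, (x_r, y_s, z)). Then dist_{(G,c)}(r, s) = min over z ∈ {1, …, l} of the smaller of the two values d_z + c^↕_z·|y_s − y_r| + c_{z, z_s} and e_z + c^↕_z·|y_s − y_r| + c_{z, z_r}. -/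
/-- Vertices of the infinite grid graph: `(x, y, z)` where `z` is the layer. -/
abbrev Vtx : Type := ℤ × ℤ × ℤ

/-- Two vertices of the infinite grid graph with layers `1, …, l` are adjacent iff both have
their layer coordinate in `{1, …, l}` and they differ by exactly `1` in exactly one
coordinate.  An edge changing the first coordinate is horizontal, one changing the second
coordinate is vertical, and one changing the third coordinate is a via. -/
def Adj (l : ℤ) (u v : Vtx) : Prop :=
  1 ≤ u.2.2 ∧ u.2.2 ≤ l ∧ 1 ≤ v.2.2 ∧ v.2.2 ≤ l ∧
    |u.1 - v.1| + |u.2.1 - v.2.1| + |u.2.2 - v.2.2| = 1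

/-- Simple-model edge cost: a horizontal (resp. vertical) edge on layer `z` costs `ch z`
(resp. `cv z`) and a via between layers `z` and `z+1` costs `cvia z`. -/
def ecost (ch cv cvia : ℤ → ℝ) (u v : Vtx) : ℝ :=
  if u.1 ≠ v.1 then ch u.2.2
  else if u.2.1 ≠ v.2.1 then cv u.2.2
  else cvia (min u.2.2 v.2.2)

/-- The cost of a walk (given as the list of its vertices) is the sum of its edge costs. -/
def wcost (c : Vtx → Vtx → ℝ) : List Vtx → ℝ
  | [] => 0
  | [_] => 0
  | u :: v :: P => c u v + wcost c (v :: P)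

/-- `P` is a walk from `u` to `v` with respect to the adjacency relation `A`. -/
def IsWalkA (A : Vtx → Vtx → Prop) (P : List Vtx) (u v : Vtx) : Prop :=
  P ≠ [] ∧ P.Chain' A ∧ P.head? = some u ∧ P.getLast? = some v

/-- The distance between two vertices: the infimum cost of a walk between them. -/
noncomputable def gdistA (A : Vtx → Vtx → Prop) (c : Vtx → Vtx → ℝ) (u v : Vtx) : ℝ :=
  sInf { m : ℝ | ∃ P, IsWalkA A P u v ∧ wcost c P = m }

/-- The distance from a vertex to a set of vertices. -/
noncomputable def gdistSetA (A : Vtx → Vtx → Prop) (c : Vtx → Vtx → ℝ) (u : Vtx)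
    (T : Set Vtx) : ℝ :=
  sInf { m : ℝ | ∃ P v, v ∈ T ∧ IsWalkA A P u v ∧ wcost c P = m }

/-- `cviaSum cvia z z'` is the total cost of a stack of vias between layers `z` and `z'`,
i.e. `Σ_{ζ = min z z'}^{max z z' − 1} cvia ζ` (symmetric in `z` and `z'`). -/
noncomputable def cviaSum (cvia : ℤ → ℝ) (z z' : ℤ) : ℝ :=
  ∑ ζ ∈ Finset.Icc (min z z') (max z z' - 1), cvia ζ


/-!
Split the cost of a walk from `r` to `s` into its vertical part and the rest. The vertical edges
cross every row between `y_r` and `y_s`, so the vertical part is at least `c↕_z·|y_s − y_r|` for the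
cheapest layer `z` carrying a vertical edge. Cutting the walk at such an edge, in column `x_p`, the
rest consists of two walks in the (x, layer)-plane, from `r` to `(x_p, z)` and from `(x_p, z)` to
`s`, and a planar walk between layers `z₁` and `z₂` over horizontal distance `d` costs at least
`c_{z₁,ζ} + c↔_ζ·d + c_{ζ,z₂}` for some layer `ζ`. Running both planar pieces on the cheaper of
their two horizontal layers bounds the cost below by `d_z + c↕_z·|y_s − y_r| + c_{z,z_s}` or by
`e_z + c↕_z·|y_s − y_r| + c_{z,z_r}`; conversely, each of these values is attained by a walk.
-/

section Walks

variable {A : Vtx → Vtx → Prop} {c : Vtx → Vtx → ℝ}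

theorem isWalkA_singleton {a u v : Vtx} : IsWalkA A [a] u v ↔ a = u ∧ a = v := by
  simp [IsWalkA, List.Chain', eq_comm]

theorem isWalkA_cons_cons {a b u v : Vtx} {P : List Vtx} :
    IsWalkA A (a :: b :: P) u v ↔ a = u ∧ A a b ∧ IsWalkA A (b :: P) b v := by
  simp [IsWalkA, List.Chain', List.isChain_cons_cons]
  tauto

theorem IsWalkA.append : ∀ {P Q : List Vtx} {u v w : Vtx}, IsWalkA A P u v → IsWalkA A Q v w →
    IsWalkA A (P ++ Q.tail) u w
  | [], _, _, _, _, hP, _ => absurd rfl hP.1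
  | [a], Q, u, v, w, hP, hQ => by
    obtain ⟨rfl, rfl⟩ := isWalkA_singleton.1 hP
    obtain ⟨Q, rfl⟩ := List.head?_eq_some_iff.1 hQ.2.2.1
    exact hQ
  | a :: b :: P, Q, u, v, w, hP, hQ => by
    obtain ⟨rfl, hab, hP⟩ := isWalkA_cons_cons.1 hP
    exact isWalkA_cons_cons.2 ⟨rfl, hab, hP.append hQ⟩

theorem IsWalkA.reverse (hA : ∀ a b, A a b → A b a) {P : List Vtx} {u v : Vtx}
    (h : IsWalkA A P u v) : IsWalkA A P.reverse v u := by
  refine ⟨by simp [h.1], ?_, ?_, ?_⟩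
  · rw [List.Chain', List.isChain_reverse]
    exact h.2.1.imp fun a b => hA a b
  · rw [List.head?_reverse]; exact h.2.2.2
  · rw [List.getLast?_reverse]; exact h.2.2.1

theorem wcost_append : ∀ {P Q : List Vtx} {v : Vtx}, P.getLast? = some v → Q.head? = some v →
    wcost c (P ++ Q.tail) = wcost c P + wcost c Q
  | [], _, _, hP, _ => by simp at hP
  | [a], Q, v, hP, hQ => by
    obtain rfl : a = v := by simpa using hP
    obtain ⟨Q, rfl⟩ := List.head?_eq_some_iff.1 hQ
    simp [wcost]
  | a :: b :: P, Q, v, hP, hQ => by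
    rw [List.getLast?_cons_cons] at hP
    have := wcost_append hP hQ
    simp only [List.cons_append, wcost] at this ⊢
    rw [this, add_assoc]

theorem wcost_reverse (hc : ∀ a b, A a b → c b a = c a b) :
    ∀ {P : List Vtx}, P.IsChain A → wcost c P.reverse = wcost c P
  | [], _ => rfl
  | [_], _ => rfl
  | a :: b :: P, h => by
    rw [List.isChain_cons_cons] at h
    have hsplit := wcost_append (c := c) (P := (b :: P).reverse) (Q := [b, a]) (by simp) rfl
    rw [List.reverse_cons]
    simp only [List.tail_cons, wcost, add_zero] at hsplit ⊢
    rw [hsplit, wcost_reverse hc h.2, hc a b h.1, add_comm]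

theorem wcost_nonneg (hc : ∀ a b, A a b → 0 ≤ c a b) :
    ∀ {P : List Vtx}, P.IsChain A → 0 ≤ wcost c P
  | [], _ | [_], _ => le_rfl
  | a :: b :: P, h => by
    rw [List.isChain_cons_cons] at h
    exact add_nonneg (hc a b h.1) (wcost_nonneg hc h.2)

theorem wcost_add (c' : Vtx → Vtx → ℝ) : ∀ P : List Vtx, wcost (c + c') P = wcost c P + wcost c' P
  | [] | [_] => by simp [wcost]
  | a :: b :: P => by
    simp only [wcost, wcost_add c' (b :: P), Pi.add_apply]
    ring

theorem exists_walk_of_le (f : ℤ → Vtx) (w : ℤ → ℝ) {a b : ℤ} (hab : a ≤ b)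
    (hf : ∀ i, a ≤ i → i < b → A (f i) (f (i + 1)) ∧ c (f i) (f (i + 1)) = w i) :
    ∃ P, IsWalkA A P (f a) (f b) ∧ wcost c P = ∑ i ∈ Finset.Ico a b, w i := by
  induction b, hab using Int.leInduction with
  | base => exact ⟨[f a], isWalkA_singleton.2 ⟨rfl, rfl⟩, by simp [wcost]⟩
  | succ b hab ih =>
    obtain ⟨P, hP, hcost⟩ := ih fun i hi hib => hf i hi (by omega)
    obtain ⟨hadj, hw⟩ := hf b hab (by omega)
    have hedge : IsWalkA A [f b, f (b + 1)] (f b) (f (b + 1)) :=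
      isWalkA_cons_cons.2 ⟨rfl, hadj, isWalkA_singleton.2 ⟨rfl, rfl⟩⟩
    refine ⟨P ++ [f (b + 1)], hP.append hedge, ?_⟩
    rw [← Finset.sum_Ico_add_eq_sum_Ico_add_one hab, ← hcost, ← hw]
    simpa [wcost] using wcost_append hP.2.2.2 hedge.2.2.1

theorem gdistA_le_wcost (hc : ∀ a b, A a b → 0 ≤ c a b) {P : List Vtx} {u v : Vtx}
    (hP : IsWalkA A P u v) : gdistA A c u v ≤ wcost c P :=
  csInf_le ⟨0, by rintro _ ⟨Q, hQ, rfl⟩; exact wcost_nonneg hc hQ.2.1⟩ ⟨P, hP, rfl⟩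

theorem le_gdistA {u v : Vtx} {x : ℝ} (hne : ∃ P, IsWalkA A P u v)
    (h : ∀ P, IsWalkA A P u v → x ≤ wcost c P) : x ≤ gdistA A c u v := by
  obtain ⟨P, hP⟩ := hne
  exact le_csInf ⟨_, P, hP, rfl⟩ (by rintro _ ⟨Q, hQ, rfl⟩; exact h Q hQ)

theorem gdistA_comm (hA : ∀ a b, A a b → A b a) (hc : ∀ a b, A a b → c b a = c a b)
    (u v : Vtx) : gdistA A c u v = gdistA A c v u := by
  unfold gdistA
  congr 1
  ext m
  constructor <;> rintro ⟨P, hP, rfl⟩ <;>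
    exact ⟨P.reverse, hP.reverse hA, wcost_reverse hc hP.2.1⟩

theorem gdistA_triangle (hc : ∀ a b, A a b → 0 ≤ c a b) {u v w : Vtx}
    (huv : ∃ P, IsWalkA A P u v) (hvw : ∃ Q, IsWalkA A Q v w) :
    gdistA A c u w ≤ gdistA A c u v + gdistA A c v w := by
  have hPQ : ∀ P, IsWalkA A P u v → ∀ Q, IsWalkA A Q v w →
      gdistA A c u w ≤ wcost c P + wcost c Q := fun P hP Q hQ =>
    (gdistA_le_wcost hc (hP.append hQ)).trans_eq (wcost_append hP.2.2.2 hQ.2.2.1)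
  have hQ : ∀ P, IsWalkA A P u v → gdistA A c u w - wcost c P ≤ gdistA A c v w :=
    fun P hP => le_gdistA hvw fun Q hQ => by linarith [hPQ P hP Q hQ]
  have : gdistA A c u w - gdistA A c v w ≤ gdistA A c u v :=
    le_gdistA huv fun P hP => by linarith [hQ P hP]
  linarith

end Walks

section Grid

variable {l : ℤ} {ch cv cvia : ℤ → ℝ}

theorem Adj.symm {u v : Vtx} (h : Adj l u v) : Adj l v u := by
  obtain ⟨h1, h2, h3, h4, h5⟩ := h
  refine ⟨h3, h4, h1, h2, ?_⟩
  rwa [abs_sub_comm v.1, abs_sub_comm v.2.1, abs_sub_comm v.2.2]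

theorem Adj.horizontal_or_vertical_or_via {u v : Vtx} (h : Adj l u v) :
    (|u.1 - v.1| = 1 ∧ u.2 = v.2) ∨
    (u.1 = v.1 ∧ |u.2.1 - v.2.1| = 1 ∧ u.2.2 = v.2.2) ∨
    (u.1 = v.1 ∧ u.2.1 = v.2.1 ∧ |u.2.2 - v.2.2| = 1) := by
  obtain ⟨-, -, -, -, h⟩ := h
  simp only [Prod.ext_iff, Int.abs_eq_natAbs] at h ⊢
  omega

theorem ecost_of_horizontal {u v : Vtx} (h : |u.1 - v.1| = 1) :
    ecost ch cv cvia u v = ch u.2.2 := by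
  have : u.1 ≠ v.1 := by rintro h'; simp [h'] at h
  simp [ecost, this]

theorem ecost_of_vertical {u v : Vtx} (hx : u.1 = v.1) (hy : |u.2.1 - v.2.1| = 1) :
    ecost ch cv cvia u v = cv u.2.2 := by
  have : u.2.1 ≠ v.2.1 := by rintro h'; simp [h'] at hy
  simp [ecost, hx, this]

theorem ecost_of_via {u v : Vtx} (hx : u.1 = v.1) (hy : u.2.1 = v.2.1) :
    ecost ch cv cvia u v = cvia (min u.2.2 v.2.2) := by
  simp [ecost, hx, hy]

theorem ecost_comm_of_adj {u v : Vtx} (h : Adj l u v) :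
    ecost ch cv cvia v u = ecost ch cv cvia u v := by
  rcases h.horizontal_or_vertical_or_via with ⟨hx, hyz⟩ | ⟨hx, hy, hz⟩ | ⟨hx, hy, hz⟩
  · rw [ecost_of_horizontal hx, ecost_of_horizontal (by rwa [abs_sub_comm]), hyz]
  · rw [ecost_of_vertical hx hy, ecost_of_vertical hx.symm (by rwa [abs_sub_comm]), hz]
  · rw [ecost_of_via hx hy, ecost_of_via hx.symm hy.symm, min_comm]

theorem ecost_nonneg_of_adj (hch : ∀ z, 1 ≤ z → z ≤ l → 0 ≤ ch z)
    (hcv : ∀ z, 1 ≤ z → z ≤ l → 0 ≤ cv z) (hcvia : ∀ z, 1 ≤ z → z < l → 0 ≤ cvia z)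
    {u v : Vtx} (h : Adj l u v) : 0 ≤ ecost ch cv cvia u v := by
  obtain ⟨hu1, hu2, hv1, hv2, -⟩ := id h
  rcases h.horizontal_or_vertical_or_via with ⟨hx, -⟩ | ⟨hx, hy, -⟩ | ⟨hx, hy, hz⟩
  · rw [ecost_of_horizontal hx]; exact hch _ hu1 hu2
  · rw [ecost_of_vertical hx hy]; exact hcv _ hu1 hu2
  · rw [ecost_of_via hx hy, Int.abs_eq_natAbs] at *
    exact hcvia _ (le_min hu1 hv1) (by omega)

theorem ecost_eq_add_vertical : ecost ch cv cvia = ecost ch 0 cvia + ecost 0 cv 0 := by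
  ext u v
  simp only [ecost, Pi.add_apply, Pi.zero_apply]
  split_ifs <;> simp

theorem cviaSum_eq_sum_Ico (z z' : ℤ) :
    cviaSum cvia z z' = ∑ ζ ∈ Finset.Ico (min z z') (max z z'), cvia ζ := by
  unfold cviaSum
  congr 1
  ext
  simp only [Finset.mem_Icc, Finset.mem_Ico]
  omega

theorem cviaSum_self (z : ℤ) : cviaSum cvia z z = 0 := by
  simp [cviaSum_eq_sum_Ico]

theorem cviaSum_comm (z z' : ℤ) : cviaSum cvia z z' = cviaSum cvia z' z := by
  rw [cviaSum_eq_sum_Ico, cviaSum_eq_sum_Ico, min_comm, max_comm]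

theorem cviaSum_of_abs_sub_eq_one {z z' : ℤ} (h : |z - z'| = 1) :
    cviaSum cvia z z' = cvia (min z z') := by
  have : Finset.Icc (min z z') (max z z' - 1) = {min z z'} := by
    ext
    simp only [Finset.mem_Icc, Finset.mem_singleton, Int.abs_eq_natAbs] at h ⊢
    omega
  rw [cviaSum, this, Finset.sum_singleton]

theorem cviaSum_eq_abs_sub (hcvia : ∀ z, 1 ≤ z → z < l → 0 ≤ cvia z) {a b : ℤ}
    (ha : a ∈ Set.Icc 1 l) (hb : b ∈ Set.Icc 1 l) :
    cviaSum cvia a b = |cviaSum cvia 1 b - cviaSum cvia 1 a| := by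
  wlog hab : a ≤ b generalizing a b
  · rw [cviaSum_comm, this hb ha (by omega), abs_sub_comm]
  have hsplit : cviaSum cvia 1 a + cviaSum cvia a b = cviaSum cvia 1 b := by
    simp only [cviaSum_eq_sum_Ico, min_eq_left ha.1, max_eq_right ha.1, min_eq_left hab,
      max_eq_right hab, min_eq_left (ha.1.trans hab), max_eq_right (ha.1.trans hab)]
    rw [← Finset.sum_union (Finset.Ico_disjoint_Ico_consecutive 1 a b),
      Finset.Ico_union_Ico_eq_Ico ha.1 hab]
  have hnonneg : 0 ≤ cviaSum cvia a b := by
    rw [cviaSum_eq_sum_Ico, min_eq_left hab, max_eq_right hab]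
    exact Finset.sum_nonneg fun ζ hζ => by
      rw [Finset.mem_Ico] at hζ
      exact hcvia ζ (ha.1.trans hζ.1) (hζ.2.trans_le hb.2)
  rw [← hsplit, add_sub_cancel_left, abs_of_nonneg hnonneg]

theorem cviaSum_triangle (hcvia : ∀ z, 1 ≤ z → z < l → 0 ≤ cvia z) {a b z : ℤ}
    (ha : a ∈ Set.Icc 1 l) (hb : b ∈ Set.Icc 1 l) (hz : z ∈ Set.Icc 1 l) :
    cviaSum cvia a b ≤ cviaSum cvia a z + cviaSum cvia z b := by
  rw [cviaSum_eq_abs_sub hcvia ha hb, cviaSum_eq_abs_sub hcvia ha hz,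
    cviaSum_eq_abs_sub hcvia hz hb, add_comm]
  exact abs_sub_le _ _ _

end Grid

section GridWalks

variable {l : ℤ} {ch cv cvia : ℤ → ℝ}

theorem sum_Ico_const_of_le {a b : ℤ} (h : a ≤ b) (t : ℝ) :
    ∑ _i ∈ Finset.Ico a b, t = t * |(a : ℝ) - b| := by
  have hlen : (((b - a).toNat : ℤ) : ℝ) = b - a := by
    rw [Int.toNat_of_nonneg (by omega)]; push_cast; ring
  rw [Finset.sum_const, Int.card_Ico, nsmul_eq_mul, abs_sub_comm,
    abs_of_nonneg (by simpa using h), ← hlen, mul_comm]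
  rfl

theorem wcost_reverse_grid {P : List Vtx} (hP : P.IsChain (Adj l)) :
    wcost (ecost ch cv cvia) P.reverse = wcost (ecost ch cv cvia) P :=
  wcost_reverse (fun _ _ => ecost_comm_of_adj) hP

theorem exists_walk_horizontal {z : ℤ} (hz : z ∈ Set.Icc 1 l) (x x' y : ℤ) :
    ∃ P, IsWalkA (Adj l) P (x, y, z) (x', y, z) ∧
      wcost (ecost ch cv cvia) P = ch z * |(x : ℝ) - x'| := by
  wlog h : x ≤ x' generalizing x x'
  · obtain ⟨P, hP, hcost⟩ := this x' x (by omega)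
    exact ⟨P.reverse, hP.reverse fun _ _ => Adj.symm, by
      rw [wcost_reverse_grid hP.2.1, hcost, abs_sub_comm]⟩
  obtain ⟨P, hP, hcost⟩ := exists_walk_of_le (A := Adj l) (c := ecost ch cv cvia)
    (fun i => (i, y, z)) (fun _ => ch z) h fun i _ _ => ⟨by simp [Adj, hz.1, hz.2], by simp [ecost]⟩
  exact ⟨P, hP, hcost.trans (sum_Ico_const_of_le h _)⟩

theorem exists_walk_vertical {z : ℤ} (hz : z ∈ Set.Icc 1 l) (x y y' : ℤ) :
    ∃ P, IsWalkA (Adj l) P (x, y, z) (x, y', z) ∧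
      wcost (ecost ch cv cvia) P = cv z * |(y : ℝ) - y'| := by
  wlog h : y ≤ y' generalizing y y'
  · obtain ⟨P, hP, hcost⟩ := this y' y (by omega)
    exact ⟨P.reverse, hP.reverse fun _ _ => Adj.symm, by
      rw [wcost_reverse_grid hP.2.1, hcost, abs_sub_comm]⟩
  obtain ⟨P, hP, hcost⟩ := exists_walk_of_le (A := Adj l) (c := ecost ch cv cvia)
    (fun i => (x, i, z)) (fun _ => cv z) h fun i _ _ => ⟨by simp [Adj, hz.1, hz.2], by simp [ecost]⟩
  exact ⟨P, hP, hcost.trans (sum_Ico_const_of_le h _)⟩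

theorem exists_walk_via {z z' : ℤ} (hz : z ∈ Set.Icc 1 l) (hz' : z' ∈ Set.Icc 1 l) (x y : ℤ) :
    ∃ P, IsWalkA (Adj l) P (x, y, z) (x, y, z') ∧
      wcost (ecost ch cv cvia) P = cviaSum cvia z z' := by
  wlog h : z ≤ z' generalizing z z'
  · obtain ⟨P, hP, hcost⟩ := this hz' hz (by omega)
    exact ⟨P.reverse, hP.reverse fun _ _ => Adj.symm, by
      rw [wcost_reverse_grid hP.2.1, hcost, cviaSum_comm]⟩
  obtain ⟨P, hP, hcost⟩ := exists_walk_of_le (A := Adj l) (c := ecost ch cv cvia)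
    (fun i => (x, y, i)) cvia h fun i hi hi' =>
      ⟨by have := hz.1; have := hz'.2; simp [Adj]; omega, by simp [ecost]⟩
  exact ⟨P, hP, by rw [hcost, cviaSum_eq_sum_Ico, min_eq_left h, max_eq_right h]⟩

theorem exists_walk {u v : Vtx} (hu : u.2.2 ∈ Set.Icc 1 l) (hv : v.2.2 ∈ Set.Icc 1 l) :
    ∃ P, IsWalkA (Adj l) P u v := by
  obtain ⟨P₁, hP₁, -⟩ := exists_walk_horizontal (ch := 0) (cv := 0) (cvia := 0) hu u.1 v.1 u.2.1
  obtain ⟨P₂, hP₂, -⟩ := exists_walk_vertical (ch := 0) (cv := 0) (cvia := 0) hu v.1 u.2.1 v.2.1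
  obtain ⟨P₃, hP₃, -⟩ := exists_walk_via (ch := 0) (cv := 0) (cvia := 0) hu hv v.1 v.2.1
  exact ⟨_, (hP₁.append hP₂).append hP₃⟩

variable (hch : ∀ z, 1 ≤ z → z ≤ l → 0 ≤ ch z) (hcv : ∀ z, 1 ≤ z → z ≤ l → 0 ≤ cv z)
  (hcvia : ∀ z, 1 ≤ z → z < l → 0 ≤ cvia z)
include hch hcv hcvia

theorem gdistA_grid_triangle {u v w : Vtx} (hu : u.2.2 ∈ Set.Icc 1 l)
    (hv : v.2.2 ∈ Set.Icc 1 l) (hw : w.2.2 ∈ Set.Icc 1 l) :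
    gdistA (Adj l) (ecost ch cv cvia) u w ≤
      gdistA (Adj l) (ecost ch cv cvia) u v + gdistA (Adj l) (ecost ch cv cvia) v w :=
  gdistA_triangle (fun _ _ => ecost_nonneg_of_adj hch hcv hcvia) (exists_walk hu hv)
    (exists_walk hv hw)

theorem gdistA_le_of_isWalkA {P : List Vtx} {u v : Vtx} (hP : IsWalkA (Adj l) P u v) :
    gdistA (Adj l) (ecost ch cv cvia) u v ≤ wcost (ecost ch cv cvia) P :=
  gdistA_le_wcost (fun _ _ => ecost_nonneg_of_adj hch hcv hcvia) hP

end GridWalks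

noncomputable def detourCost (ch cvia : ℤ → ℝ) (z ζ z' : ℤ) (d : ℝ) : ℝ :=
  cviaSum cvia z ζ + ch ζ * d + cviaSum cvia ζ z'

section Detour

variable {l : ℤ} {ch cvia : ℤ → ℝ}

theorem detourCost_self (z : ℤ) : detourCost ch cvia z z z 0 = 0 := by
  simp [detourCost, cviaSum_self]

theorem detourCost_comm (z ζ z' : ℤ) (d : ℝ) :
    detourCost ch cvia z ζ z' d = detourCost ch cvia z' ζ z d := by
  simp only [detourCost, cviaSum_comm z ζ, cviaSum_comm ζ z']
  ring

theorem detourCost_mono {z ζ z' : ℤ} (hζ : 0 ≤ ch ζ) {d d' : ℝ} (h : d ≤ d') :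
    detourCost ch cvia z ζ z' d ≤ detourCost ch cvia z ζ z' d' := by
  unfold detourCost
  gcongr

variable (hch : ∀ z, 1 ≤ z → z ≤ l → 0 ≤ ch z) (hcvia : ∀ z, 1 ≤ z → z < l → 0 ≤ cvia z)
include hcvia

theorem detourCost_le_cviaSum_add {w w' ζ : ℤ} (hw : w ∈ Set.Icc 1 l)
    (hw' : w' ∈ Set.Icc 1 l) (hζ : ζ ∈ Set.Icc 1 l) (z : ℤ) (d : ℝ) :
    detourCost ch cvia w ζ z d ≤ cviaSum cvia w w' + detourCost ch cvia w' ζ z d := by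
  have := cviaSum_triangle hcvia hw hζ hw'
  unfold detourCost
  linarith

theorem detourCost_add_le {a b z ζ₁ ζ₂ : ℤ} (hb : b ∈ Set.Icc 1 l) (hz : z ∈ Set.Icc 1 l)
    (hζ₂ : ζ₂ ∈ Set.Icc 1 l) (h : ch ζ₁ ≤ ch ζ₂) {d₁ d₂ : ℝ} (hd₂ : 0 ≤ d₂) :
    detourCost ch cvia a ζ₁ z (d₁ + d₂) + cviaSum cvia z b ≤
      detourCost ch cvia a ζ₁ z d₁ + detourCost ch cvia z ζ₂ b d₂ := by
  have := cviaSum_triangle hcvia hz hb hζ₂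
  have := mul_le_mul_of_nonneg_right h hd₂
  unfold detourCost
  linarith [mul_add (ch ζ₁) d₁ d₂]

theorem exists_detourCost_le_add_detourCost {a b z ζ₁ ζ₂ : ℤ} (ha : a ∈ Set.Icc 1 l)
    (hb : b ∈ Set.Icc 1 l) (hz : z ∈ Set.Icc 1 l) (hζ₁ : ζ₁ ∈ Set.Icc 1 l)
    (hζ₂ : ζ₂ ∈ Set.Icc 1 l) {d₁ d₂ : ℝ} (hd₁ : 0 ≤ d₁) (hd₂ : 0 ≤ d₂) :
    ∃ ζ ∈ Set.Icc 1 l, detourCost ch cvia a ζ b (d₁ + d₂) ≤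
      detourCost ch cvia a ζ₁ z d₁ + detourCost ch cvia z ζ₂ b d₂ := by
  rcases le_total (ch ζ₁) (ch ζ₂) with h | h
  · refine ⟨ζ₁, hζ₁, ?_⟩
    have := detourCost_add_le hcvia hb hz hζ₂ h (a := a) (d₁ := d₁) hd₂
    have := cviaSum_triangle hcvia hζ₁ hb hz
    unfold detourCost at *
    linarith
  · refine ⟨ζ₂, hζ₂, ?_⟩
    have := detourCost_add_le hcvia ha hz hζ₁ h (a := b) (d₁ := d₂) hd₁
    have := cviaSum_triangle hcvia hζ₂ ha hz
    rw [detourCost_comm a, detourCost_comm a, detourCost_comm z ζ₂]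
    unfold detourCost at *
    linarith

include hch

theorem exists_detourCost_le_add {w ζ z : ℤ} (hw : w ∈ Set.Icc 1 l) (hζ : ζ ∈ Set.Icc 1 l)
    (hz : z ∈ Set.Icc 1 l) {d d' : ℝ} (hd : 0 ≤ d) (hd' : d' ≤ d + 1) :
    ∃ ζ' ∈ Set.Icc 1 l, detourCost ch cvia w ζ' z d' ≤ ch w + detourCost ch cvia w ζ z d := by
  rcases lt_or_ge (ch w) (ch ζ) with h | h
  · refine ⟨w, hw, ?_⟩
    have := cviaSum_triangle hcvia hw hz hζ
    have := mul_le_mul_of_nonneg_left hd' (hch w hw.1 hw.2)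
    have := mul_le_mul_of_nonneg_right h.le hd
    simp only [detourCost, cviaSum_self]
    linarith
  · refine ⟨ζ, hζ, ?_⟩
    have := mul_le_mul_of_nonneg_left hd' (hch ζ hζ.1 hζ.2)
    unfold detourCost
    linarith

end Detour

section Split

variable {l : ℤ} {ch cv cvia : ℤ → ℝ}
  (hch : ∀ z, 1 ≤ z → z ≤ l → 0 ≤ ch z) (hcv : ∀ z, 1 ≤ z → z ≤ l → 0 ≤ cv z)
  (hcvia : ∀ z, 1 ≤ z → z < l → 0 ≤ cvia z)
include hch hcv hcvia

/-- The walk is cut at a vertical edge in column `xp` on layer `z`; `ecost ch 0 cvia` prices its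
non-vertical edges and `ecost 0 cv 0` its vertical ones. -/
theorem exists_split_le_wcost : ∀ {P : List Vtx} {u v : Vtx}, IsWalkA (Adj l) P u v →
    u.2.2 ∈ Set.Icc 1 l → v.2.2 ∈ Set.Icc 1 l →
    ∃ z ∈ Set.Icc 1 l, ∃ ζ₁ ∈ Set.Icc 1 l, ∃ ζ₂ ∈ Set.Icc 1 l, ∃ xp : ℤ,
      detourCost ch cvia u.2.2 ζ₁ z |(u.1 : ℝ) - xp| +
          detourCost ch cvia z ζ₂ v.2.2 |(xp : ℝ) - v.1| ≤ wcost (ecost ch 0 cvia) P ∧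
        cv z * |(u.2.1 : ℝ) - v.2.1| ≤ wcost (ecost 0 cv 0) P
  | [], _, _, hP, _, _ => absurd rfl hP.1
  | [a], u, v, hP, hu, _ => by
    obtain ⟨rfl, rfl⟩ := isWalkA_singleton.1 hP
    exact ⟨a.2.2, hu, a.2.2, hu, a.2.2, hu, a.1, by simp [detourCost_self, wcost]⟩
  | a :: w :: P, u, v, hP, hu, hv => by
    obtain ⟨rfl, hadj, hW⟩ := isWalkA_cons_cons.1 hP
    have hw : w.2.2 ∈ Set.Icc 1 l := ⟨hadj.2.2.1, hadj.2.2.2.1⟩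
    obtain ⟨z, hz, ζ₁, hζ₁, ζ₂, hζ₂, xp, hH, hV⟩ := exists_split_le_wcost hW hw hv
    simp only [wcost]
    rcases hadj.horizontal_or_vertical_or_via with ⟨hx, hyz⟩ | ⟨hx, hy, hz'⟩ | ⟨hx, hy, hz'⟩
    · rw [ecost_of_horizontal hx, ecost_of_horizontal hx, Pi.zero_apply, zero_add]
      have hstep : |(a.1 : ℝ) - xp| ≤ |(w.1 : ℝ) - xp| + 1 := by
        have : |(a.1 : ℝ) - w.1| = 1 := by exact_mod_cast hx
        linarith [abs_sub_le (a.1 : ℝ) w.1 xp]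
      rw [← hyz] at hH hV
      obtain ⟨ζ, hζ, hle⟩ := exists_detourCost_le_add hch hcvia hu hζ₁ hz (abs_nonneg _) hstep
      exact ⟨z, hz, ζ, hζ, ζ₂, hζ₂, xp, by linarith, hV⟩
    · rw [ecost_of_vertical hx hy, ecost_of_vertical hx hy, Pi.zero_apply, zero_add]
      rw [← hx, ← hz'] at hH
      have hyv : |(a.2.1 : ℝ) - v.2.1| ≤ 1 + |(w.2.1 : ℝ) - v.2.1| := by
        have : |(a.2.1 : ℝ) - w.2.1| = 1 := by exact_mod_cast hy
        linarith [abs_sub_le (a.2.1 : ℝ) w.2.1 v.2.1]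
      by_cases hcheap : cv a.2.2 * |(w.2.1 : ℝ) - v.2.1| ≤ wcost (ecost 0 cv 0) (w :: P)
      · -- this edge's layer is cheap enough for the remaining rows: move the vertical run here
        obtain ⟨ζ, hζ, hflat⟩ := exists_detourCost_le_add_detourCost hcvia hu hv hz hζ₁ hζ₂
          (abs_nonneg ((a.1 : ℝ) - xp)) (abs_nonneg ((xp : ℝ) - v.1))
        have := detourCost_mono (z := a.2.2) (z' := v.2.2) (cvia := cvia) (hch ζ hζ.1 hζ.2)
          (abs_sub_le (a.1 : ℝ) xp v.1)
        have := mul_le_mul_of_nonneg_left hyv (hcv a.2.2 hu.1 hu.2)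
        refine ⟨a.2.2, hu, a.2.2, hu, ζ, hζ, a.1, ?_, by linarith⟩
        rw [sub_self, abs_zero, detourCost_self]
        linarith
      · have hcvz : cv z ≤ cv a.2.2 :=
          (lt_of_mul_lt_mul_right (hV.trans_lt (not_le.1 hcheap)) (abs_nonneg _)).le
        have := mul_le_mul_of_nonneg_left hyv (hcv z hz.1 hz.2)
        exact ⟨z, hz, ζ₁, hζ₁, ζ₂, hζ₂, xp, by linarith, by linarith⟩
    · rw [ecost_of_via hx hy, ecost_of_via hx hy, Pi.zero_apply, zero_add,
        ← cviaSum_of_abs_sub_eq_one (cvia := cvia) hz']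
      rw [← hx] at hH
      rw [← hy] at hV
      have := detourCost_le_cviaSum_add hcvia hu hw hζ₁ z (ch := ch) |(a.1 : ℝ) - xp|
      exact ⟨z, hz, ζ₁, hζ₁, ζ₂, hζ₂, xp, by linarith, hV⟩

end Split

section Distance

variable {l : ℤ} {ch cv cvia : ℤ → ℝ}
  (hch : ∀ z, 1 ≤ z → z ≤ l → 0 ≤ ch z) (hcv : ∀ z, 1 ≤ z → z ≤ l → 0 ≤ cv z)
  (hcvia : ∀ z, 1 ≤ z → z < l → 0 ≤ cvia z)
include hch hcv hcvia

theorem gdistA_le_detourCost {a : Vtx} (ha : a.2.2 ∈ Set.Icc 1 l) {ζ z : ℤ}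
    (hζ : ζ ∈ Set.Icc 1 l) (hz : z ∈ Set.Icc 1 l) (x' : ℤ) :
    gdistA (Adj l) (ecost ch cv cvia) a (x', a.2.1, z) ≤
      detourCost ch cvia a.2.2 ζ z |(a.1 : ℝ) - x'| := by
  obtain ⟨P₁, hP₁, h₁⟩ := exists_walk_via (ch := ch) (cv := cv) (cvia := cvia) ha hζ a.1 a.2.1
  obtain ⟨P₂, hP₂, h₂⟩ := exists_walk_horizontal (ch := ch) (cv := cv) (cvia := cvia) hζ a.1 x' a.2.1
  obtain ⟨P₃, hP₃, h₃⟩ := exists_walk_via (ch := ch) (cv := cv) (cvia := cvia) hζ hz x' a.2.1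
  have hP₁₂ := hP₁.append hP₂
  have := gdistA_le_of_isWalkA hch hcv hcvia (hP₁₂.append hP₃)
  rwa [wcost_append hP₁₂.2.2.2 hP₃.2.2.1, wcost_append hP₁.2.2.2 hP₂.2.2.1, h₁, h₂, h₃] at this

theorem gdistA_le_layer {r s : Vtx} (hr : r.2.2 ∈ Set.Icc 1 l) (hs : s.2.2 ∈ Set.Icc 1 l)
    {z : ℤ} (hz : z ∈ Set.Icc 1 l) :
    gdistA (Adj l) (ecost ch cv cvia) r s ≤
      gdistA (Adj l) (ecost ch cv cvia) r (s.1, r.2.1, z) +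
        cv z * |(s.2.1 : ℝ) - r.2.1| + cviaSum cvia z s.2.2 := by
  obtain ⟨P, hP, hPc⟩ := exists_walk_vertical (ch := ch) (cv := cv) (cvia := cvia) hz s.1 r.2.1 s.2.1
  obtain ⟨Q, hQ, hQc⟩ := exists_walk_via (ch := ch) (cv := cv) (cvia := cvia) hz hs s.1 s.2.1
  have h₁ := gdistA_grid_triangle hch hcv hcvia hr hz hs (v := (s.1, r.2.1, z))
  have h₂ := gdistA_le_of_isWalkA hch hcv hcvia (hP.append hQ)
  rw [wcost_append hP.2.2.2 hQ.2.2.1, hPc, hQc, abs_sub_comm] at h₂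
  linarith

theorem gdistA_add_cviaSum_le_detourCost {a b : Vtx} (ha : a.2.2 ∈ Set.Icc 1 l)
    (hb : b.2.2 ∈ Set.Icc 1 l) {z ζ₁ ζ₂ : ℤ} (hz : z ∈ Set.Icc 1 l) (hζ₁ : ζ₁ ∈ Set.Icc 1 l)
    (hζ₂ : ζ₂ ∈ Set.Icc 1 l) (h : ch ζ₁ ≤ ch ζ₂) (xp : ℤ) :
    gdistA (Adj l) (ecost ch cv cvia) a (b.1, a.2.1, z) + cviaSum cvia z b.2.2 ≤
      detourCost ch cvia a.2.2 ζ₁ z |(a.1 : ℝ) - xp| +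
        detourCost ch cvia z ζ₂ b.2.2 |(xp : ℝ) - b.1| :=
  calc gdistA (Adj l) (ecost ch cv cvia) a (b.1, a.2.1, z) + cviaSum cvia z b.2.2
      ≤ detourCost ch cvia a.2.2 ζ₁ z (|(a.1 : ℝ) - xp| + |(xp : ℝ) - b.1|) +
          cviaSum cvia z b.2.2 := by
        grw [gdistA_le_detourCost hch hcv hcvia ha hζ₁ hz,
          detourCost_mono (hch ζ₁ hζ₁.1 hζ₁.2) (abs_sub_le (a.1 : ℝ) xp b.1)]
    _ ≤ _ := detourCost_add_le hcvia hb hz hζ₂ h (abs_nonneg _)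

theorem exists_layer_le_wcost {r s : Vtx} (hr : r.2.2 ∈ Set.Icc 1 l)
    (hs : s.2.2 ∈ Set.Icc 1 l) {P : List Vtx} (hP : IsWalkA (Adj l) P r s) :
    ∃ z ∈ Set.Icc 1 l, min
        (gdistA (Adj l) (ecost ch cv cvia) r (s.1, r.2.1, z) +
          cv z * |(s.2.1 : ℝ) - r.2.1| + cviaSum cvia z s.2.2)
        (gdistA (Adj l) (ecost ch cv cvia) s (r.1, s.2.1, z) +
          cv z * |(s.2.1 : ℝ) - r.2.1| + cviaSum cvia z r.2.2) ≤
      wcost (ecost ch cv cvia) P := by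
  obtain ⟨z, hz, ζ₁, hζ₁, ζ₂, hζ₂, xp, hH, hV⟩ := exists_split_le_wcost hch hcv hcvia hP hr hs
  have hcost : wcost (ecost ch cv cvia) P =
      wcost (ecost ch 0 cvia) P + wcost (ecost 0 cv 0) P := by
    rw [ecost_eq_add_vertical, wcost_add]
  rw [abs_sub_comm] at hV
  refine ⟨z, hz, ?_⟩
  rcases le_total (ch ζ₁) (ch ζ₂) with h | h
  · have := gdistA_add_cviaSum_le_detourCost hch hcv hcvia hr hs hz hζ₁ hζ₂ h xp
    exact min_le_of_left_le (by linarith)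
  · have := gdistA_add_cviaSum_le_detourCost hch hcv hcvia hs hr hz hζ₂ hζ₁ h xp
    rw [detourCost_comm s.2.2, detourCost_comm z ζ₁, abs_sub_comm (s.1 : ℝ) xp,
      abs_sub_comm (xp : ℝ) r.1] at this
    exact min_le_of_right_le (by linarith)

end Distance

theorem stmt5_general (l : ℤ) (ch cv cvia : ℤ → ℝ)
    (hch : ∀ z, 1 ≤ z → z ≤ l → 0 < ch z)
    (hcv : ∀ z, 1 ≤ z → z ≤ l → 0 < cv z)
    (hcvia : ∀ z, 1 ≤ z → z < l → 0 < cvia z)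
    (r s : Vtx) (hr : 1 ≤ r.2.2 ∧ r.2.2 ≤ l) (hs : 1 ≤ s.2.2 ∧ s.2.2 ≤ l) :
    IsLeast
      { m : ℝ | ∃ z : ℤ, 1 ≤ z ∧ z ≤ l ∧
          m = min
            (gdistA (Adj l) (ecost ch cv cvia) r (s.1, r.2.1, z) +
              cv z * |(s.2.1 : ℝ) - (r.2.1 : ℝ)| + cviaSum cvia z s.2.2)
            (gdistA (Adj l) (ecost ch cv cvia) s (r.1, s.2.1, z) +
              cv z * |(s.2.1 : ℝ) - (r.2.1 : ℝ)| + cviaSum cvia z r.2.2) }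
      (gdistA (Adj l) (ecost ch cv cvia) r s) := by
  have hch₀ := fun z h₁ h₂ => (hch z h₁ h₂).le
  have hcv₀ := fun z h₁ h₂ => (hcv z h₁ h₂).le
  have hcvia₀ := fun z h₁ h₂ => (hcvia z h₁ h₂).le
  set F : ℤ → ℝ := fun z => min
    (gdistA (Adj l) (ecost ch cv cvia) r (s.1, r.2.1, z) +
      cv z * |(s.2.1 : ℝ) - (r.2.1 : ℝ)| + cviaSum cvia z s.2.2)
    (gdistA (Adj l) (ecost ch cv cvia) s (r.1, s.2.1, z) +
      cv z * |(s.2.1 : ℝ) - (r.2.1 : ℝ)| + cviaSum cvia z r.2.2)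
  have hle : ∀ z ∈ Set.Icc 1 l, gdistA (Adj l) (ecost ch cv cvia) r s ≤ F z := fun z hz => by
    refine le_min (gdistA_le_layer hch₀ hcv₀ hcvia₀ hr hs hz) ?_
    rw [gdistA_comm (fun _ _ => Adj.symm) (fun _ _ => ecost_comm_of_adj), abs_sub_comm]
    exact gdistA_le_layer hch₀ hcv₀ hcvia₀ hs hr hz
  obtain ⟨z₀, hz₀, hmin⟩ := (Finset.Icc 1 l).exists_min_image F ⟨r.2.2, Finset.mem_Icc.2 hr⟩
  rw [Finset.mem_Icc] at hz₀
  have hge : F z₀ ≤ gdistA (Adj l) (ecost ch cv cvia) r s :=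
    le_gdistA (exists_walk hr hs) fun P hP => by
      obtain ⟨z, hz, hzP⟩ := exists_layer_le_wcost hch₀ hcv₀ hcvia₀ hr hs hP
      exact (hmin z (Finset.mem_Icc.2 hz)).trans hzP
  exact ⟨⟨z₀, hz₀.1, hz₀.2, (hle z₀ hz₀).antisymm hge⟩, by
    rintro m ⟨z, hz₁, hz₂, rfl⟩
    exact hle z ⟨hz₁, hz₂⟩⟩

/-- With `d_z = dist (r, (x_s, y_r, z))` and `e_z = dist (s, (x_r, y_s, z))`,
the distance `dist (r, s)` equals the minimum over `z ∈ {1, …, l}` of the smaller of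
`d_z + c↕_z·|y_s − y_r| + c_{z,z_s}` and `e_z + c↕_z·|y_s − y_r| + c_{z,z_r}`. -/
theorem stmt5 (l : ℤ) (hl : 1 ≤ l) (ch cv cvia : ℤ → ℝ)
    (hch : ∀ z, 1 ≤ z → z ≤ l → 0 < ch z)
    (hcv : ∀ z, 1 ≤ z → z ≤ l → 0 < cv z)
    (hcvia : ∀ z, 1 ≤ z → z < l → 0 < cvia z)
    (r s : Vtx) (hr : 1 ≤ r.2.2 ∧ r.2.2 ≤ l) (hs : 1 ≤ s.2.2 ∧ s.2.2 ≤ l) :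
    IsLeast
      { m : ℝ | ∃ z : ℤ, 1 ≤ z ∧ z ≤ l ∧
          m = min
            (gdistA (Adj l) (ecost ch cv cvia) r (s.1, r.2.1, z) +
              cv z * |(s.2.1 : ℝ) - (r.2.1 : ℝ)| + cviaSum cvia z s.2.2)
            (gdistA (Adj l) (ecost ch cv cvia) s (r.1, s.2.1, z) +
              cv z * |(s.2.1 : ℝ) - (r.2.1 : ℝ)| + cviaSum cvia z r.2.2) }
      (gdistA (Adj l) (ecost ch cv cvia) r s) :=
  stmt5_general l ch cv cvia hch hcv hcvia r s hr hs
end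

section
/- Let c be a simple-model cost function on the infinite grid graph G with l layers, let T ⊆ V be a nonempty union of finitely many axis-parallel rectangles each lying on a single layer, and let ξ¹ ≤ … ≤ ξ^p and υ¹ ≤ … ≤ υ^q be integer coordinates such that each of these rectangles is of the form {(x, y, ζ) ∈ V : ξ^{i⁻} ≤ x ≤ ξ^{i⁺}, υ^{j⁻} ≤ y ≤ υ^{j⁺}} for suitable indices i⁻, i⁺, j⁻, j⁺ and a layer ζ. Then for every i ∈ {0, …, p}, j ∈ {0, …, q} and z ∈ {1, …, l} (with ξ⁰ = −∞, ξ^{p+1} = ∞, υ⁰ = −∞, υ^{q+1} = ∞) there exists a set F of at most 1 + 4l + 4l² affine functions f : ℝ² → ℝ such that dist_{(G,c)}((x, y, z), T) = min{f(x, y) : f ∈ F} for every vertex (x, y, z) ∈ V with ξ^i ≤ x ≤ ξ^{i+1} and υ^j ≤ y ≤ υ^{j+1}. -/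
/-- `inSeg n ξ i x` states that the coordinate `x` lies in the `i`-th interval
`[ξ^i, ξ^{i+1}]` of the rectilinear grid given by `ξ¹ ≤ … ≤ ξ^n`
(with the conventions `ξ⁰ = −∞` and `ξ^{n+1} = ∞`). -/
def inSeg (n : ℕ) (ξ : ℕ → ℤ) (i : ℕ) (x : ℤ) : Prop :=
  (i = 0 ∨ ξ i ≤ x) ∧ (i = n ∨ x ≤ ξ (i + 1))

/-- General-model edge cost: an edge lying in the tile with indices `(i, j, z)` costs
`ch i j z`, `cv i j z` or `cvia i j z` according to its direction (for a via between layers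
`z` and `z+1` the lower layer `z` is used), and an edge lying in more than one tile gets the
minimum of the applicable costs. -/
noncomputable def gecost (p q : ℕ) (ξ υ : ℕ → ℤ) (ch cv cvia : ℕ → ℕ → ℤ → ℝ)
    (u v : Vtx) : ℝ :=
  sInf { m : ℝ | ∃ i j : ℕ, i ≤ p ∧ j ≤ q ∧
    inSeg p ξ i u.1 ∧ inSeg p ξ i v.1 ∧ inSeg q υ j u.2.1 ∧ inSeg q υ j v.2.1 ∧
    m = if u.1 ≠ v.1 then ch i j u.2.2
        else if u.2.1 ≠ v.2.1 then cv i j u.2.2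
        else cvia i j (min u.2.2 v.2.2) }

/-- The rectangle with corner grid indices `i₁, i₂` (in x), `j₁, j₂` (in y), on layer `ζ`. -/
def GridRect (ξ υ : ℕ → ℤ) (i₁ i₂ j₁ j₂ : ℕ) (ζ : ℤ) : Set Vtx :=
  { w | ξ i₁ ≤ w.1 ∧ w.1 ≤ ξ i₂ ∧ υ j₁ ≤ w.2.1 ∧ w.2.1 ≤ υ j₂ ∧ w.2.2 = ζ }

/-- `T` is consistent with the grid: it is a finite union of rectangles whose corner
coordinates are grid coordinates `ξ^{i⁻} ≤ x ≤ ξ^{i⁺}`, `υ^{j⁻} ≤ y ≤ υ^{j⁺}` with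
`1 ≤ i⁻ ≤ i⁺ ≤ p`, `1 ≤ j⁻ ≤ j⁺ ≤ q`, each on a single layer `ζ ∈ {1, …, l}`. -/
def Consistent (p q : ℕ) (ξ υ : ℕ → ℤ) (l : ℤ) (T : Set Vtx) : Prop :=
  ∃ R : Finset ((ℕ × ℕ) × (ℕ × ℕ) × ℤ),
    (∀ r ∈ R, 1 ≤ r.1.1 ∧ r.1.1 ≤ r.1.2 ∧ r.1.2 ≤ p ∧
       1 ≤ r.2.1.1 ∧ r.2.1.1 ≤ r.2.1.2 ∧ r.2.1.2 ≤ q ∧ 1 ≤ r.2.2 ∧ r.2.2 ≤ l) ∧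
    T = ⋃ r ∈ R, GridRect ξ υ r.1.1 r.1.2 r.2.1.1 r.2.1.2 r.2.2


/-! The distance to `T` is the least cost of a *route*: take vias to a layer `a`, make all
horizontal moves on `a`, take vias to a layer `b`, make all vertical moves on `b` (or the vertical
moves first), and take vias to the layer of one of the rectangles. Every route is realized by a
walk. Conversely, the least route cost `D` vanishes on `T` and satisfies `D u ≤ c(u, v) + D v`
along every edge, so it is a lower bound for the cost of every walk to `T`: if a horizontal edge
on layer `w` is cheaper than the horizontal layer of an optimal route at `v`, the route from `u`
that makes its horizontal moves on `w` pays for it.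

On a tile, the `x`-distance to an interval `[ξ^{i⁻}, ξ^{i⁺}]` of the grid is affine with slope
`0` or `±1`, so every route cost is affine with slopes in `{0, ±c_a^↔} × {0, ±c_b^↕}`. Keeping
for each of these `(1 + 2l)²` slope pairs only the smallest offset gives `F`. -/

section WalkCosts

variable {A : Vtx → Vtx → Prop} {c : Vtx → Vtx → ℝ} {T : Set Vtx}

def walkCosts (A : Vtx → Vtx → Prop) (c : Vtx → Vtx → ℝ) (u : Vtx) (T : Set Vtx) : Set ℝ :=
  { m | ∃ P v, v ∈ T ∧ IsWalkA A P u v ∧ wcost c P = m }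

lemma zero_mem_walkCosts {u : Vtx} (hu : u ∈ T) : (0 : ℝ) ∈ walkCosts A c u T :=
  ⟨[u], u, hu, ⟨List.cons_ne_nil _ _, List.isChain_singleton u, rfl, rfl⟩, rfl⟩

lemma add_mem_walkCosts {u v : Vtx} {m : ℝ} (huv : A u v) (hm : m ∈ walkCosts A c v T) :
    c u v + m ∈ walkCosts A c u T := by
  obtain ⟨P, w, hw, ⟨-, hchain, hhead, hlast⟩, rfl⟩ := hm
  obtain ⟨P, rfl⟩ : ∃ P', P = v :: P' := by
    cases P with
    | nil => simp at hhead
    | cons a P => simp only [List.head?_cons, Option.some.injEq] at hhead; exact ⟨P, hhead ▸ rfl⟩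
  refine ⟨u :: v :: P, w, hw, ⟨List.cons_ne_nil _ _, hchain.cons_cons huv, rfl, ?_⟩, rfl⟩
  rwa [List.getLast?_cons_cons]

lemma walkCosts_mono {u : Vtx} {T' : Set Vtx} (hT : T ⊆ T') :
    walkCosts A c u T ⊆ walkCosts A c u T' := by
  rintro m ⟨P, v, hv, hP, rfl⟩
  exact ⟨P, v, hT hv, hP, rfl⟩

lemma sub_add_mem_walkCosts_of_path {f : ℤ → Vtx} {g : ℤ → ℝ} {a b : ℤ} {m : ℝ} (hab : a ≤ b)
    (hstep : ∀ k, a ≤ k → k < b → A (f k) (f (k + 1)) ∧ c (f k) (f (k + 1)) = g (k + 1) - g k)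
    (hm : m ∈ walkCosts A c (f b) T) : g b - g a + m ∈ walkCosts A c (f a) T := by
  induction b, hab using Int.leInduction generalizing m with
  | base => simpa using hm
  | succ b hab ih =>
    obtain ⟨hadj, hcost⟩ := hstep b hab (lt_add_one b)
    have := ih (fun k hk hkb => hstep k hk (hkb.trans (lt_add_one b)))
      (add_mem_walkCosts hadj hm)
    rw [hcost] at this
    convert this using 1
    ring

lemma sub_add_mem_walkCosts_of_reverse_path {f : ℤ → Vtx} {g : ℤ → ℝ} {a b : ℤ} {m : ℝ}
    (hab : a ≤ b)
    (hstep : ∀ k, a ≤ k → k < b → A (f (k + 1)) (f k) ∧ c (f (k + 1)) (f k) = g (k + 1) - g k)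
    (hm : m ∈ walkCosts A c (f a) T) : g b - g a + m ∈ walkCosts A c (f b) T := by
  induction b, hab using Int.leInduction with
  | base => simpa using hm
  | succ b hab ih =>
    obtain ⟨hadj, hcost⟩ := hstep b hab (lt_add_one b)
    have := add_mem_walkCosts hadj (ih fun k hk hkb => hstep k hk (hkb.trans (lt_add_one b)))
    rw [hcost] at this
    convert this using 1
    ring

lemma abs_sub_add_mem_walkCosts_of_path {f : ℤ → Vtx} {g : ℤ → ℝ} {a b : ℤ} {m : ℝ}
    (hg : MonotoneOn g (Set.Icc (min a b) (max a b)))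
    (hstep : ∀ k, min a b ≤ k → k < max a b →
      A (f k) (f (k + 1)) ∧ A (f (k + 1)) (f k) ∧
        c (f k) (f (k + 1)) = g (k + 1) - g k ∧ c (f (k + 1)) (f k) = g (k + 1) - g k)
    (hm : m ∈ walkCosts A c (f b) T) : |g b - g a| + m ∈ walkCosts A c (f a) T := by
  rcases le_total a b with hab | hba
  · rw [min_eq_left hab, max_eq_right hab] at hg hstep
    rw [abs_of_nonneg (sub_nonneg.2 (hg ⟨le_rfl, hab⟩ ⟨hab, le_rfl⟩ hab))]
    exact sub_add_mem_walkCosts_of_path hab (fun k hk hkb => ⟨(hstep k hk hkb).1,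
      (hstep k hk hkb).2.2.1⟩) hm
  · rw [min_eq_right hba, max_eq_left hba] at hg hstep
    rw [abs_sub_comm, abs_of_nonneg (sub_nonneg.2 (hg ⟨le_rfl, hba⟩ ⟨hba, le_rfl⟩ hba))]
    exact sub_add_mem_walkCosts_of_reverse_path hba (fun k hk hkb => ⟨(hstep k hk hkb).2.1,
      (hstep k hk hkb).2.2.2⟩) hm

lemma le_of_mem_walkCosts {D : Vtx → ℝ} (hT : ∀ v ∈ T, D v ≤ 0)
    (hD : ∀ u v, A u v → D u ≤ c u v + D v) {u : Vtx} {m : ℝ} (hm : m ∈ walkCosts A c u T) :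
    D u ≤ m := by
  obtain ⟨P, v, hv, ⟨hne, hchain, hhead, hlast⟩, rfl⟩ := hm
  induction P generalizing u with
  | nil => exact absurd rfl hne
  | cons a P ih =>
    simp only [List.head?_cons, Option.some.injEq] at hhead
    subst hhead
    cases P with
    | nil =>
      simp only [List.getLast?_singleton, Option.some.injEq] at hlast
      subst hlast
      simpa [wcost] using hT _ hv
    | cons b P =>
      replace hchain : A a b ∧ (b :: P).IsChain A := List.isChain_cons_cons.mp hchain
      rw [List.getLast?_cons_cons] at hlast
      have := ih (List.cons_ne_nil _ _) hchain.2 rfl hlast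
      simp only [wcost]
      linarith [hD _ _ hchain.1]

lemma gdistSetA_eq_of_potential {D : Vtx → ℝ} (hT : ∀ v ∈ T, D v ≤ 0)
    (hD : ∀ u v, A u v → D u ≤ c u v + D v) {u : Vtx} (hu : D u ∈ walkCosts A c u T) :
    gdistSetA A c u T = D u :=
  IsLeast.csInf_eq ⟨hu, fun _ hm => le_of_mem_walkCosts hT hD hm⟩

end WalkCosts

section Grid

variable {l : ℤ} {ch cv cvia : ℤ → ℝ}

lemma adj_cases {u v : Vtx} (h : Adj l u v) :
    (1 ≤ u.2.2 ∧ u.2.2 ≤ l) ∧ (1 ≤ v.2.2 ∧ v.2.2 ≤ l) ∧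
      ((|u.1 - v.1| = 1 ∧ u.2.1 = v.2.1 ∧ u.2.2 = v.2.2) ∨
        (u.1 = v.1 ∧ |u.2.1 - v.2.1| = 1 ∧ u.2.2 = v.2.2) ∨
        (u.1 = v.1 ∧ u.2.1 = v.2.1 ∧ |u.2.2 - v.2.2| = 1)) := by
  obtain ⟨h1, h2, h3, h4, habs⟩ := h
  refine ⟨⟨h1, h2⟩, ⟨h3, h4⟩, ?_⟩
  simp only [abs_eq_max_neg] at habs ⊢
  omega

/-- Heights of the layers, chosen so that `viaDist` is the cost of the vias between two layers. -/
noncomputable def layerHeight (cvia : ℤ → ℝ) (z : ℤ) : ℝ := ∑ k ∈ Finset.Ico 1 z, cvia k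

noncomputable def viaDist (cvia : ℤ → ℝ) (a b : ℤ) : ℝ := |layerHeight cvia a - layerHeight cvia b|

lemma layerHeight_add_one {z : ℤ} (hz : 1 ≤ z) :
    layerHeight cvia (z + 1) = layerHeight cvia z + cvia z :=
  (Finset.sum_Ico_add_eq_sum_Ico_add_one hz cvia).symm

lemma monotoneOn_layerHeight (hcvia : ∀ z, 1 ≤ z → z < l → 0 ≤ cvia z) :
    MonotoneOn (layerHeight cvia) (Set.Icc 1 l) :=
  monotoneOn_of_le_succ Set.ordConnected_Icc fun z _ hz hz' => by
    rw [Order.succ_eq_add_one] at hz' ⊢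
    rw [layerHeight_add_one hz.1]
    linarith [hcvia z hz.1 (by linarith [hz'.2])]

lemma viaDist_le_ecost (hcvia : ∀ z, 1 ≤ z → z < l → 0 ≤ cvia z) {x y a b : ℤ}
    (ha : 1 ≤ a ∧ a ≤ l) (hb : 1 ≤ b ∧ b ≤ l) (hab : |a - b| = 1) :
    viaDist cvia a b ≤ ecost ch cv cvia (x, y, a) (x, y, b) := by
  simp only [ecost, ne_eq, not_true_eq_false, if_false, viaDist]
  rw [abs_eq_max_neg] at hab
  rcases (by omega : b = a + 1 ∨ a = b + 1) with rfl | rfl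
  · rw [min_eq_left (by omega), layerHeight_add_one ha.1, abs_sub_comm,
      abs_of_nonneg (by linarith [hcvia a ha.1 (by omega)])]
    linarith
  · rw [min_eq_right (by omega), layerHeight_add_one hb.1,
      abs_of_nonneg (by linarith [hcvia b hb.1 (by omega)])]
    linarith

lemma viaDist_self (a : ℤ) : viaDist cvia a a = 0 := by simp [viaDist]

lemma viaDist_triangle (a b c : ℤ) : viaDist cvia a c ≤ viaDist cvia a b + viaDist cvia b c :=
  abs_sub_le _ _ _

lemma viaDist_nonneg (a b : ℤ) : 0 ≤ viaDist cvia a b := abs_nonneg _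

lemma add_mem_walkCosts_horizontal {z : ℤ} (hch : 0 ≤ ch z) (hz : 1 ≤ z ∧ z ≤ l) {T : Set Vtx}
    {x x' y : ℤ} {m : ℝ} (hm : m ∈ walkCosts (Adj l) (ecost ch cv cvia) (x', y, z) T) :
    |x' - x| * ch z + m ∈ walkCosts (Adj l) (ecost ch cv cvia) (x, y, z) T := by
  have key := abs_sub_add_mem_walkCosts_of_path (A := Adj l) (c := ecost ch cv cvia)
    (f := fun k => (k, y, z)) (g := fun k => k * ch z) (a := x) (b := x')
    (fun a _ b _ hab => mul_le_mul_of_nonneg_right (Int.cast_le.2 hab) hch)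
    (fun k _ _ => by simp [Adj, ecost, hz]; ring) hm
  rwa [← sub_mul, abs_mul, abs_of_nonneg hch, ← Int.cast_sub, ← Int.cast_abs] at key

lemma add_mem_walkCosts_vertical {z : ℤ} (hcv : 0 ≤ cv z) (hz : 1 ≤ z ∧ z ≤ l) {T : Set Vtx}
    {x y y' : ℤ} {m : ℝ} (hm : m ∈ walkCosts (Adj l) (ecost ch cv cvia) (x, y', z) T) :
    |y' - y| * cv z + m ∈ walkCosts (Adj l) (ecost ch cv cvia) (x, y, z) T := by
  have key := abs_sub_add_mem_walkCosts_of_path (A := Adj l) (c := ecost ch cv cvia)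
    (f := fun k => (x, k, z)) (g := fun k => k * cv z) (a := y) (b := y')
    (fun a _ b _ hab => mul_le_mul_of_nonneg_right (Int.cast_le.2 hab) hcv)
    (fun k _ _ => by simp [Adj, ecost, hz]; ring) hm
  rwa [← sub_mul, abs_mul, abs_of_nonneg hcv, ← Int.cast_sub, ← Int.cast_abs] at key

lemma add_mem_walkCosts_via (hcvia : ∀ z, 1 ≤ z → z < l → 0 ≤ cvia z) {T : Set Vtx}
    {x y z z' : ℤ} (hz : 1 ≤ z ∧ z ≤ l) (hz' : 1 ≤ z' ∧ z' ≤ l) {m : ℝ}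
    (hm : m ∈ walkCosts (Adj l) (ecost ch cv cvia) (x, y, z') T) :
    viaDist cvia z z' + m ∈ walkCosts (Adj l) (ecost ch cv cvia) (x, y, z) T := by
  have hsub : Set.Icc (min z z') (max z z') ⊆ Set.Icc 1 l := Set.Icc_subset_Icc
    (le_min hz.1 hz'.1) (max_le hz.2 hz'.2)
  rw [viaDist, abs_sub_comm]
  refine abs_sub_add_mem_walkCosts_of_path (f := fun k => (x, y, k))
    ((monotoneOn_layerHeight hcvia).mono hsub) (fun k hk hkb => ?_) hm
  have h1 : 1 ≤ k := le_trans (le_min hz.1 hz'.1) hk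
  have h2 : k + 1 ≤ l := lt_of_lt_of_le hkb (max_le hz.2 hz'.2)
  simp only [Adj, ecost, ne_eq, not_true_eq_false, if_false, layerHeight_add_one h1]
  refine ⟨⟨h1, by omega, by omega, h2, by simp⟩, ⟨by omega, h2, h1, by omega, by simp⟩, ?_, ?_⟩
  · rw [min_eq_left (by omega)]; ring
  · rw [min_eq_right (by omega)]; ring

end Grid

section Routes

def intervalDist (a b x : ℤ) : ℤ := max 0 (max (a - x) (x - b))

lemma intervalDist_nonneg (a b x : ℤ) : 0 ≤ intervalDist a b x := le_max_left _ _

lemma intervalDist_le_add {a b x x' : ℤ} (h : |x - x'| = 1) :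
    intervalDist a b x ≤ intervalDist a b x' + 1 := by
  rw [abs_eq_max_neg] at h
  unfold intervalDist
  omega

lemma intervalDist_eq_zero {a b x : ℤ} (ha : a ≤ x) (hb : x ≤ b) : intervalDist a b x = 0 := by
  unfold intervalDist
  omega

lemma intervalDist_eq_abs {a b : ℤ} (hab : a ≤ b) (x : ℤ) :
    intervalDist a b x = |max a (min x b) - x| := by
  rw [abs_eq_max_neg]
  unfold intervalDist
  omega

/-- A route to the rectangle `rect` performs all its horizontal moves on layer `hLayer` and all
its vertical moves on layer `vLayer`, the horizontal ones first iff `hFirst`. -/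
structure Route where
  rect : (ℕ × ℕ) × (ℕ × ℕ) × ℤ
  hLayer : ℤ
  vLayer : ℤ
  hFirst : Bool

def Route.equivProd : Route ≃ ((ℕ × ℕ) × (ℕ × ℕ) × ℤ) × ℤ × ℤ × Bool where
  toFun ρ := (ρ.rect, ρ.hLayer, ρ.vLayer, ρ.hFirst)
  invFun t := ⟨t.1, t.2.1, t.2.2.1, t.2.2.2⟩
  left_inv _ := rfl
  right_inv _ := rfl

noncomputable def routes (l : ℤ) (R : Finset ((ℕ × ℕ) × (ℕ × ℕ) × ℤ)) : Finset Route :=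
  (R ×ˢ Finset.Icc 1 l ×ˢ Finset.Icc 1 l ×ˢ Finset.univ).map Route.equivProd.symm.toEmbedding

lemma mem_routes {l : ℤ} {R : Finset ((ℕ × ℕ) × (ℕ × ℕ) × ℤ)} {ρ : Route} :
    ρ ∈ routes l R ↔
      ρ.rect ∈ R ∧ (1 ≤ ρ.hLayer ∧ ρ.hLayer ≤ l) ∧ (1 ≤ ρ.vLayer ∧ ρ.vLayer ≤ l) := by
  simp [routes, Finset.mem_map_equiv, Route.equivProd]

noncomputable def tourCost (cvia : ℤ → ℝ) (z ζ a b : ℤ) (hFirst : Bool) : ℝ :=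
  if hFirst then viaDist cvia z a + viaDist cvia a b + viaDist cvia b ζ
  else viaDist cvia z b + viaDist cvia b a + viaDist cvia a ζ

variable {cvia : ℤ → ℝ}

lemma tourCost_le_viaDist_add (z z' ζ a b : ℤ) (o : Bool) :
    tourCost cvia z ζ a b o ≤ viaDist cvia z z' + tourCost cvia z' ζ a b o := by
  cases o
  · simp only [tourCost, Bool.false_eq_true, if_false]
    linarith [viaDist_triangle (cvia := cvia) z z' b]
  · simp only [tourCost, if_true]
    linarith [viaDist_triangle (cvia := cvia) z z' a]

lemma tourCost_start_hLayer_le (z ζ a b : ℤ) (o : Bool) :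
    tourCost cvia z ζ z b true ≤ tourCost cvia z ζ a b o := by
  cases o <;> simp only [tourCost, Bool.false_eq_true, if_true, if_false, viaDist_self]
  · linarith [viaDist_triangle (cvia := cvia) b a ζ, viaDist_nonneg (cvia := cvia) z b]
  · linarith [viaDist_triangle (cvia := cvia) z a b]

lemma tourCost_start_vLayer_le (z ζ a b : ℤ) (o : Bool) :
    tourCost cvia z ζ a z false ≤ tourCost cvia z ζ a b o := by
  cases o <;> simp only [tourCost, Bool.false_eq_true, if_true, if_false, viaDist_self]
  · linarith [viaDist_triangle (cvia := cvia) z b a]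
  · linarith [viaDist_triangle (cvia := cvia) a b ζ, viaDist_nonneg (cvia := cvia) z a]

variable {ch cv : ℤ → ℝ} {ξ υ : ℕ → ℤ}

noncomputable def routeCost (ch cv cvia : ℤ → ℝ) (ξ υ : ℕ → ℤ) (ρ : Route) (u : Vtx) : ℝ :=
  (intervalDist (ξ ρ.rect.1.1) (ξ ρ.rect.1.2) u.1 : ℝ) * ch ρ.hLayer
    + (intervalDist (υ ρ.rect.2.1.1) (υ ρ.rect.2.1.2) u.2.1 : ℝ) * cv ρ.vLayer
    + tourCost cvia u.2.2 ρ.rect.2.2 ρ.hLayer ρ.vLayer ρ.hFirst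

variable {l : ℤ}

lemma routeCost_mem_walkCosts (hch : ∀ z, 1 ≤ z → z ≤ l → 0 ≤ ch z)
    (hcv : ∀ z, 1 ≤ z → z ≤ l → 0 ≤ cv z) (hcvia : ∀ z, 1 ≤ z → z < l → 0 ≤ cvia z)
    {ρ : Route} (ha : 1 ≤ ρ.hLayer ∧ ρ.hLayer ≤ l) (hb : 1 ≤ ρ.vLayer ∧ ρ.vLayer ≤ l)
    (hζ : 1 ≤ ρ.rect.2.2 ∧ ρ.rect.2.2 ≤ l)
    (hx : ξ ρ.rect.1.1 ≤ ξ ρ.rect.1.2) (hy : υ ρ.rect.2.1.1 ≤ υ ρ.rect.2.1.2)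
    {u : Vtx} (hu : 1 ≤ u.2.2 ∧ u.2.2 ≤ l) :
    routeCost ch cv cvia ξ υ ρ u ∈ walkCosts (Adj l) (ecost ch cv cvia) u
      (GridRect ξ υ ρ.rect.1.1 ρ.rect.1.2 ρ.rect.2.1.1 ρ.rect.2.1.2 ρ.rect.2.2) := by
  obtain ⟨⟨⟨i₁, i₂⟩, ⟨j₁, j₂⟩, ζ⟩, a, b, o⟩ := ρ
  obtain ⟨x, y, z⟩ := u
  dsimp only at *
  set tx := max (ξ i₁) (min x (ξ i₂))
  set ty := max (υ j₁) (min y (υ j₂))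
  have htarget : (0 : ℝ) ∈ walkCosts (Adj l) (ecost ch cv cvia) (tx, ty, ζ)
      (GridRect ξ υ i₁ i₂ j₁ j₂ ζ) :=
    zero_mem_walkCosts ⟨le_max_left _ _, max_le hx (min_le_right _ _),
      le_max_left _ _, max_le hy (min_le_right _ _), rfl⟩
  simp only [routeCost, intervalDist_eq_abs hx, intervalDist_eq_abs hy]
  cases o
  · have : _ ∈ walkCosts (Adj l) (ecost ch cv cvia) (x, y, z) (GridRect ξ υ i₁ i₂ j₁ j₂ ζ) :=
      add_mem_walkCosts_via hcvia hu hb <| add_mem_walkCosts_vertical (hcv b hb.1 hb.2) hb <|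
      add_mem_walkCosts_via hcvia hb ha <| add_mem_walkCosts_horizontal (hch a ha.1 ha.2) ha <|
      add_mem_walkCosts_via hcvia ha hζ htarget
    convert this using 1
    simp only [tourCost, Bool.false_eq_true, if_false]
    ring
  · have : _ ∈ walkCosts (Adj l) (ecost ch cv cvia) (x, y, z) (GridRect ξ υ i₁ i₂ j₁ j₂ ζ) :=
      add_mem_walkCosts_via hcvia hu ha <| add_mem_walkCosts_horizontal (hch a ha.1 ha.2) ha <|
      add_mem_walkCosts_via hcvia ha hb <| add_mem_walkCosts_vertical (hcv b hb.1 hb.2) hb <|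
      add_mem_walkCosts_via hcvia hb hζ htarget
    convert this using 1
    simp only [tourCost, if_true]
    ring

variable {R : Finset ((ℕ × ℕ) × (ℕ × ℕ) × ℤ)}

lemma exists_routeCost_le_horizontal (hch : ∀ z, 1 ≤ z → z ≤ l → 0 ≤ ch z) {ρ : Route}
    (hρ : ρ ∈ routes l R) {x x' y w : ℤ} (hw : 1 ≤ w ∧ w ≤ l) (hx : |x - x'| = 1) :
    ∃ ρ' ∈ routes l R,
      routeCost ch cv cvia ξ υ ρ' (x, y, w) ≤ ch w + routeCost ch cv cvia ξ υ ρ (x', y, w) := by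
  obtain ⟨hr, ha, hb⟩ := mem_routes.1 hρ
  have hd : (intervalDist (ξ ρ.rect.1.1) (ξ ρ.rect.1.2) x : ℝ)
      ≤ intervalDist (ξ ρ.rect.1.1) (ξ ρ.rect.1.2) x' + 1 := by
    exact_mod_cast intervalDist_le_add hx
  have hd' : (0 : ℝ) ≤ intervalDist (ξ ρ.rect.1.1) (ξ ρ.rect.1.2) x' := by
    exact_mod_cast intervalDist_nonneg ..
  have hcw := hch w hw.1 hw.2
  by_cases hc : ch ρ.hLayer ≤ ch w
  · refine ⟨ρ, hρ, ?_⟩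
    simp only [routeCost]
    nlinarith [hch _ ha.1 ha.2]
  · refine ⟨{ ρ with hLayer := w, hFirst := true }, mem_routes.2 ⟨hr, hw, hb⟩, ?_⟩
    simp only [routeCost]
    nlinarith [tourCost_start_hLayer_le (cvia := cvia) w ρ.rect.2.2 ρ.hLayer ρ.vLayer ρ.hFirst]

lemma exists_routeCost_le_vertical (hcv : ∀ z, 1 ≤ z → z ≤ l → 0 ≤ cv z) {ρ : Route}
    (hρ : ρ ∈ routes l R) {x y y' w : ℤ} (hw : 1 ≤ w ∧ w ≤ l) (hy : |y - y'| = 1) :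
    ∃ ρ' ∈ routes l R,
      routeCost ch cv cvia ξ υ ρ' (x, y, w) ≤ cv w + routeCost ch cv cvia ξ υ ρ (x, y', w) := by
  obtain ⟨hr, ha, hb⟩ := mem_routes.1 hρ
  have hd : (intervalDist (υ ρ.rect.2.1.1) (υ ρ.rect.2.1.2) y : ℝ)
      ≤ intervalDist (υ ρ.rect.2.1.1) (υ ρ.rect.2.1.2) y' + 1 := by
    exact_mod_cast intervalDist_le_add hy
  have hd' : (0 : ℝ) ≤ intervalDist (υ ρ.rect.2.1.1) (υ ρ.rect.2.1.2) y' := by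
    exact_mod_cast intervalDist_nonneg ..
  have hcw := hcv w hw.1 hw.2
  by_cases hc : cv ρ.vLayer ≤ cv w
  · refine ⟨ρ, hρ, ?_⟩
    simp only [routeCost]
    nlinarith [hcv _ hb.1 hb.2]
  · refine ⟨{ ρ with vLayer := w, hFirst := false }, mem_routes.2 ⟨hr, ha, hw⟩, ?_⟩
    simp only [routeCost]
    nlinarith [tourCost_start_vLayer_le (cvia := cvia) w ρ.rect.2.2 ρ.hLayer ρ.vLayer ρ.hFirst]

lemma exists_routeCost_le_of_adj (hch : ∀ z, 1 ≤ z → z ≤ l → 0 ≤ ch z)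
    (hcv : ∀ z, 1 ≤ z → z ≤ l → 0 ≤ cv z) (hcvia : ∀ z, 1 ≤ z → z < l → 0 ≤ cvia z)
    {ρ : Route} (hρ : ρ ∈ routes l R) {u v : Vtx} (huv : Adj l u v) :
    ∃ ρ' ∈ routes l R,
      routeCost ch cv cvia ξ υ ρ' u ≤ ecost ch cv cvia u v + routeCost ch cv cvia ξ υ ρ v := by
  obtain ⟨x, y, z⟩ := u
  obtain ⟨x', y', z'⟩ := v
  obtain ⟨hz, hz', ⟨hx, rfl, rfl⟩ | ⟨rfl, hy, rfl⟩ | ⟨rfl, rfl, hzz⟩⟩ := adj_cases huv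
  · have hne : x ≠ x' := by rintro rfl; simp at hx
    simpa [ecost, hne] using exists_routeCost_le_horizontal hch hρ hz hx
  · have hne : y ≠ y' := by rintro rfl; simp at hy
    simpa [ecost, hne] using exists_routeCost_le_vertical hcv hρ hz hy
  · refine ⟨ρ, hρ, ?_⟩
    simp only [routeCost]
    linarith [viaDist_le_ecost (ch := ch) (cv := cv) (x := x) (y := y) hcvia hz hz' hzz,
      tourCost_le_viaDist_add (cvia := cvia) z z' ρ.rect.2.2 ρ.hLayer ρ.vLayer ρ.hFirst]

theorem gdistSetA_eq_inf'_routeCost (hch : ∀ z, 1 ≤ z → z ≤ l → 0 ≤ ch z)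
    (hcv : ∀ z, 1 ≤ z → z ≤ l → 0 ≤ cv z) (hcvia : ∀ z, 1 ≤ z → z < l → 0 ≤ cvia z)
    (hR : ∀ r ∈ R, ξ r.1.1 ≤ ξ r.1.2 ∧ υ r.2.1.1 ≤ υ r.2.1.2 ∧ 1 ≤ r.2.2 ∧ r.2.2 ≤ l)
    (hne : (routes l R).Nonempty) {u : Vtx} (hu : 1 ≤ u.2.2 ∧ u.2.2 ≤ l) :
    gdistSetA (Adj l) (ecost ch cv cvia) u
        (⋃ r ∈ R, GridRect ξ υ r.1.1 r.1.2 r.2.1.1 r.2.1.2 r.2.2) =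
      (routes l R).inf' hne (routeCost ch cv cvia ξ υ · u) := by
  refine gdistSetA_eq_of_potential
    (D := fun u => (routes l R).inf' hne (routeCost ch cv cvia ξ υ · u)) ?_ ?_ ?_
  · intro v hv
    obtain ⟨r, hr, hv⟩ := Set.mem_iUnion₂.1 hv
    obtain ⟨hx₁, hx₂, hy₁, hy₂, hζ⟩ := hv
    obtain ⟨-, -, hζ₁, hζ₂⟩ := hR r hr
    have hρ : (⟨r, r.2.2, r.2.2, true⟩ : Route) ∈ routes l R :=
      mem_routes.2 ⟨hr, ⟨hζ₁, hζ₂⟩, ⟨hζ₁, hζ₂⟩⟩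
    refine (Finset.inf'_le _ hρ).trans_eq ?_
    simp [routeCost, intervalDist_eq_zero, hx₁, hx₂, hy₁, hy₂, hζ, tourCost, viaDist_self]
  · intro u v huv
    obtain ⟨ρ, hρ, hv⟩ := Finset.exists_mem_eq_inf' hne (routeCost ch cv cvia ξ υ · v)
    obtain ⟨ρ', hρ', hle⟩ := exists_routeCost_le_of_adj hch hcv hcvia hρ huv
    exact (Finset.inf'_le _ hρ').trans (hv ▸ hle)
  · obtain ⟨ρ, hρ, hu'⟩ := Finset.exists_mem_eq_inf' hne (routeCost ch cv cvia ξ υ · u)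
    obtain ⟨hr, ha, hb⟩ := mem_routes.1 hρ
    obtain ⟨hx, hy, hζ₁, hζ₂⟩ := hR _ hr
    rw [hu']
    exact walkCosts_mono (fun w hw => Set.mem_biUnion hr hw)
      (routeCost_mem_walkCosts hch hcv hcvia ha hb ⟨hζ₁, hζ₂⟩ hx hy hu)

end Routes

section Affine

lemma monotoneOn_Icc_of_le_add_one {n : ℕ} {ξ : ℕ → ℤ} (h : ∀ i, 1 ≤ i → i < n → ξ i ≤ ξ (i + 1)) :
    MonotoneOn ξ (Set.Icc 1 n) :=
  monotoneOn_of_le_succ Set.ordConnected_Icc fun i _ hi hi' => by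
    rw [Order.succ_eq_add_one] at hi' ⊢
    exact h i hi.1 hi'.2

lemma exists_intervalDist_eq_affine {n : ℕ} {ξ : ℕ → ℤ} (hξ : MonotoneOn ξ (Set.Icc 1 n))
    {i i₁ i₂ : ℕ} (hi : i ≤ n) (h₁ : 1 ≤ i₁) (h₁₂ : i₁ ≤ i₂) (h₂ : i₂ ≤ n) :
    ∃ s d : ℤ, |s| ≤ 1 ∧ ∀ x, inSeg n ξ i x → intervalDist (ξ i₁) (ξ i₂) x = s * x + d := by
  have mono : ∀ a b, 1 ≤ a → a ≤ b → b ≤ n → ξ a ≤ ξ b := fun a b ha hab hb =>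
    hξ ⟨ha, hab.trans hb⟩ ⟨ha.trans hab, hb⟩ hab
  have := mono i₁ i₂ h₁ h₁₂ h₂
  unfold inSeg intervalDist
  rcases (by omega : i₂ ≤ i ∨ i < i₁ ∨ (i₁ ≤ i ∧ i < i₂)) with h | h | h
  · have := mono i₂ i (by omega) h hi
    exact ⟨1, -ξ i₂, by norm_num, fun x hx => by omega⟩
  · have := mono (i + 1) i₁ (by omega) h (by omega)
    exact ⟨-1, ξ i₁, by norm_num, fun x hx => by omega⟩
  · have := mono i₁ i h₁ h.1 hi
    have := mono (i + 1) i₂ (by omega) h.2 h₂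
    exact ⟨0, 0, by norm_num, fun x hx => by omega⟩

noncomputable def slopeSet (c : ℤ → ℝ) (l : ℤ) : Finset ℝ :=
  insert 0 ((({-1, 1} : Finset ℤ) ×ˢ Finset.Icc 1 l).image fun sw => (sw.1 : ℝ) * c sw.2)

lemma mul_mem_slopeSet (c : ℤ → ℝ) {l s w : ℤ} (hs : |s| ≤ 1) (hw : 1 ≤ w ∧ w ≤ l) :
    (s : ℝ) * c w ∈ slopeSet c l := by
  rw [abs_le] at hs
  rcases (by omega : s = 0 ∨ s = -1 ∨ s = 1) with rfl | hs | hs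
  · simp [slopeSet]
  all_goals
    refine Finset.mem_insert_of_mem (Finset.mem_image.2 ⟨(s, w), ?_, rfl⟩)
    simp [hs, hw]

lemma card_slopeSet_le (c : ℤ → ℝ) {l : ℤ} (hl : 0 ≤ l) :
    ((slopeSet c l).card : ℤ) ≤ 1 + 2 * l := by
  have h : (slopeSet c l).card ≤ (({-1, 1} : Finset ℤ) ×ˢ Finset.Icc 1 l).card + 1 :=
    (Finset.card_insert_le _ _).trans (Nat.add_le_add_right Finset.card_image_le 1)
  rw [Finset.card_product, Int.card_Icc, add_sub_cancel_right] at h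
  have : (({-1, 1} : Finset ℤ)).card = 2 := rfl
  rw [this] at h
  zify at h
  rw [Int.toNat_of_nonneg hl] at h
  linarith

lemma exists_routeCost_eq_affine {l : ℤ} {ch cv cvia : ℤ → ℝ} {p q : ℕ} {ξ υ : ℕ → ℤ}
    (hξ : MonotoneOn ξ (Set.Icc 1 p)) (hυ : MonotoneOn υ (Set.Icc 1 q)) {i j : ℕ}
    (hi : i ≤ p) (hj : j ≤ q) {R : Finset ((ℕ × ℕ) × (ℕ × ℕ) × ℤ)}
    (hR : ∀ r ∈ R, 1 ≤ r.1.1 ∧ r.1.1 ≤ r.1.2 ∧ r.1.2 ≤ p ∧ 1 ≤ r.2.1.1 ∧ r.2.1.1 ≤ r.2.1.2 ∧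
      r.2.1.2 ≤ q ∧ 1 ≤ r.2.2 ∧ r.2.2 ≤ l)
    {ρ : Route} (hρ : ρ ∈ routes l R) (z : ℤ) :
    ∃ f : ℝ × ℝ × ℝ, f.1 ∈ slopeSet ch l ∧ f.2.1 ∈ slopeSet cv l ∧
      ∀ x y, inSeg p ξ i x → inSeg q υ j y →
        routeCost ch cv cvia ξ υ ρ (x, y, z) = f.1 * x + f.2.1 * y + f.2.2 := by
  obtain ⟨hr, ha, hb⟩ := mem_routes.1 hρ
  obtain ⟨hi₁, hi₁₂, hi₂, hj₁, hj₁₂, hj₂, -⟩ := hR _ hr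
  obtain ⟨s, d, hs, hsd⟩ := exists_intervalDist_eq_affine hξ hi hi₁ hi₁₂ hi₂
  obtain ⟨s', d', hs', hsd'⟩ := exists_intervalDist_eq_affine hυ hj hj₁ hj₁₂ hj₂
  refine ⟨(s * ch ρ.hLayer, s' * cv ρ.vLayer,
      d * ch ρ.hLayer + d' * cv ρ.vLayer + tourCost cvia z ρ.rect.2.2 ρ.hLayer ρ.vLayer ρ.hFirst),
    mul_mem_slopeSet ch hs ha, mul_mem_slopeSet cv hs' hb, fun x y hx hy => ?_⟩
  simp only [routeCost, hsd x hx, hsd' y hy]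
  push_cast
  ring

lemma exists_subset_card_le_forall_offset_le (G : Finset (ℝ × ℝ × ℝ)) :
    ∃ F ⊆ G, F.card ≤ (G.image fun f => (f.1, f.2.1)).card ∧
      ∀ g ∈ G, ∃ f ∈ F, f.1 = g.1 ∧ f.2.1 = g.2.1 ∧ f.2.2 ≤ g.2.2 := by
  classical
  refine ⟨G.filter fun f => ∀ g ∈ G, g.1 = f.1 → g.2.1 = f.2.1 → f.2.2 ≤ g.2.2,
    Finset.filter_subset _ _, ?_, fun g hg => ?_⟩
  · refine Finset.card_le_card_of_injOn _
      (fun f hf => Finset.mem_image_of_mem _ (Finset.mem_filter.1 hf).1) fun f hf f' hf' hff' => ?_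
    simp only [Finset.coe_filter, Set.mem_ofPred_eq, Prod.mk.injEq] at hf hf' hff'
    have := hf.2 f' hf'.1 hff'.1.symm hff'.2.symm
    have := hf'.2 f hf.1 hff'.1 hff'.2
    exact Prod.ext hff'.1 (Prod.ext hff'.2 (by linarith))
  · obtain ⟨f, hf, hmin⟩ := Finset.exists_min_image (G.filter fun f => f.1 = g.1 ∧ f.2.1 = g.2.1)
      (·.2.2) ⟨g, Finset.mem_filter.2 ⟨hg, rfl, rfl⟩⟩
    obtain ⟨hfG, hf₁, hf₂⟩ := Finset.mem_filter.1 hf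
    refine ⟨f, Finset.mem_filter.2 ⟨hfG, fun g' hg' h₁ h₂ => hmin g' ?_⟩, hf₁, hf₂,
      hmin g (Finset.mem_filter.2 ⟨hg, rfl, rfl⟩)⟩
    exact Finset.mem_filter.2 ⟨hg', h₁.trans hf₁, h₂.trans hf₂⟩

lemma exists_affine_isLeast_inf' {ι : Type*} (I : Finset ι) (hI : I.Nonempty)
    (φ : ι → ℤ → ℤ → ℝ) (Px Py : ℤ → Prop) (A B : Finset ℝ)
    (hφ : ∀ t ∈ I, ∃ f : ℝ × ℝ × ℝ, f.1 ∈ A ∧ f.2.1 ∈ B ∧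
      ∀ x y, Px x → Py y → φ t x y = f.1 * x + f.2.1 * y + f.2.2) :
    ∃ F : Finset (ℝ × ℝ × ℝ), F.card ≤ A.card * B.card ∧ ∀ x y, Px x → Py y →
      IsLeast {m | ∃ f ∈ F, m = f.1 * x + f.2.1 * y + f.2.2} (I.inf' hI (φ · x y)) := by
  classical
  choose! g hgA hgB hg using hφ
  obtain ⟨F, hFG, hFcard, hF⟩ := exists_subset_card_le_forall_offset_le (I.image g)
  refine ⟨F, hFcard.trans ?_, fun x y hx hy => ?_⟩
  · rw [← Finset.card_product]
    refine Finset.card_le_card fun ab hab => ?_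
    obtain ⟨_, hf, rfl⟩ := Finset.mem_image.1 hab
    obtain ⟨t, ht, rfl⟩ := Finset.mem_image.1 hf
    exact Finset.mem_product.2 ⟨hgA t ht, hgB t ht⟩
  have hlow : ∀ f ∈ F, I.inf' hI (φ · x y) ≤ f.1 * x + f.2.1 * y + f.2.2 := fun f hf => by
    obtain ⟨t, ht, rfl⟩ := Finset.mem_image.1 (hFG hf)
    exact (Finset.inf'_le _ ht).trans_eq (hg t ht x y hx hy)
  refine ⟨?_, fun m ⟨f, hf, hm⟩ => hm ▸ hlow f hf⟩
  obtain ⟨t, ht, hmin⟩ := Finset.exists_mem_eq_inf' hI (φ · x y)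
  obtain ⟨f, hf, h₁, h₂, h₃⟩ := hF (g t) (Finset.mem_image_of_mem g ht)
  refine ⟨f, hf, le_antisymm (hlow f hf) ?_⟩
  rw [hmin, hg t ht x y hx hy, h₁, h₂]
  linarith

end Affine

theorem stmt11_general (l : ℤ) (ch cv cvia : ℤ → ℝ)
    (hch : ∀ z, 1 ≤ z → z ≤ l → 0 < ch z)
    (hcv : ∀ z, 1 ≤ z → z ≤ l → 0 < cv z)
    (hcvia : ∀ z, 1 ≤ z → z < l → 0 < cvia z)
    (p q : ℕ) (ξ υ : ℕ → ℤ)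
    (hξ : ∀ i, 1 ≤ i → i < p → ξ i ≤ ξ (i + 1)) (hυ : ∀ j, 1 ≤ j → j < q → υ j ≤ υ (j + 1))
    (T : Set Vtx) (hTne : T.Nonempty) (hTcon : Consistent p q ξ υ l T) :
    ∀ (i j : ℕ) (z : ℤ), i ≤ p → j ≤ q → 1 ≤ z → z ≤ l →
      ∃ F : Finset (ℝ × ℝ × ℝ),
        (F.card : ℤ) ≤ 1 + 4 * l + 4 * l ^ 2 ∧
        ∀ x y : ℤ, inSeg p ξ i x → inSeg q υ j y →
          IsLeast { m : ℝ | ∃ f ∈ F, m = f.1 * (x : ℝ) + f.2.1 * (y : ℝ) + f.2.2 }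
            (gdistSetA (Adj l) (ecost ch cv cvia) (x, y, z) T) := by
  intro i j z hi hj hz₁ hz₂
  obtain ⟨R, hR, rfl⟩ := hTcon
  have hξm := monotoneOn_Icc_of_le_add_one hξ
  have hυm := monotoneOn_Icc_of_le_add_one hυ
  have hne : (routes l R).Nonempty := by
    obtain ⟨r, hr, -⟩ := Set.mem_iUnion₂.1 hTne.some_mem
    exact ⟨⟨r, z, z, true⟩, mem_routes.2 ⟨hr, ⟨hz₁, hz₂⟩, ⟨hz₁, hz₂⟩⟩⟩
  have hbox : ∀ r ∈ R, ξ r.1.1 ≤ ξ r.1.2 ∧ υ r.2.1.1 ≤ υ r.2.1.2 ∧ 1 ≤ r.2.2 ∧ r.2.2 ≤ l :=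
    fun r hr => by
      obtain ⟨hi₁, hi₁₂, hi₂, hj₁, hj₁₂, hj₂, hζ⟩ := hR r hr
      exact ⟨hξm ⟨hi₁, hi₁₂.trans hi₂⟩ ⟨hi₁.trans hi₁₂, hi₂⟩ hi₁₂,
        hυm ⟨hj₁, hj₁₂.trans hj₂⟩ ⟨hj₁.trans hj₁₂, hj₂⟩ hj₁₂, hζ⟩
  obtain ⟨F, hFcard, hF⟩ := exists_affine_isLeast_inf' (routes l R) hne
    (fun ρ x y => routeCost ch cv cvia ξ υ ρ (x, y, z)) (inSeg p ξ i) (inSeg q υ j)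
    (slopeSet ch l) (slopeSet cv l) fun ρ hρ => exists_routeCost_eq_affine hξm hυm hi hj hR hρ z
  refine ⟨F, ?_, fun x y hx hy => ?_⟩
  · have hA := card_slopeSet_le ch (l := l) (by omega)
    have hB := card_slopeSet_le cv (l := l) (by omega)
    calc (F.card : ℤ) ≤ (slopeSet ch l).card * (slopeSet cv l).card := by exact_mod_cast hFcard
      _ ≤ (1 + 2 * l) * (1 + 2 * l) := mul_le_mul hA hB (by positivity) (by omega)
      _ = 1 + 4 * l + 4 * l ^ 2 := by ring
  · rw [gdistSetA_eq_inf'_routeCost (fun z h₁ h₂ => (hch z h₁ h₂).le)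
      (fun z h₁ h₂ => (hcv z h₁ h₂).le) (fun z h₁ h₂ => (hcvia z h₁ h₂).le) hbox hne ⟨hz₁, hz₂⟩]
    exact hF x y hx hy

/-- In the simple cost model, let `T` be a nonempty finite union of
axis-parallel single-layer rectangles fitting the grid coordinates `ξ¹ ≤ … ≤ ξ^p`,
`υ¹ ≤ … ≤ υ^q` (this is `Consistent p q ξ υ l T`).  Then for every tile (given by
`i ∈ {0,…,p}`, `j ∈ {0,…,q}`, `z ∈ {1,…,l}`) there is a set `F` of at most `1 + 4l + 4l²`
affine functions `ℝ² → ℝ` (each represented by its coefficient triple `(a, b, d)`,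
i.e. `(x, y) ↦ a·x + b·y + d`) whose pointwise minimum at `(x, y)` equals the distance from
the vertex `(x, y, z)` of the tile to `T`. -/
theorem stmt11 (l : ℤ) (hl : 1 ≤ l) (ch cv cvia : ℤ → ℝ)
    (hch : ∀ z, 1 ≤ z → z ≤ l → 0 < ch z)
    (hcv : ∀ z, 1 ≤ z → z ≤ l → 0 < cv z)
    (hcvia : ∀ z, 1 ≤ z → z < l → 0 < cvia z)
    (p q : ℕ) (ξ υ : ℕ → ℤ)
    (hξ : ∀ i, 1 ≤ i → i < p → ξ i ≤ ξ (i + 1)) (hυ : ∀ j, 1 ≤ j → j < q → υ j ≤ υ (j + 1))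
    (T : Set Vtx) (hTne : T.Nonempty) (hTcon : Consistent p q ξ υ l T) :
    ∀ (i j : ℕ) (z : ℤ), i ≤ p → j ≤ q → 1 ≤ z → z ≤ l →
      ∃ F : Finset (ℝ × ℝ × ℝ),
        (F.card : ℤ) ≤ 1 + 4 * l + 4 * l ^ 2 ∧
        ∀ x y : ℤ, inSeg p ξ i x → inSeg q υ j y →
          IsLeast { m : ℝ | ∃ f ∈ F, m = f.1 * (x : ℝ) + f.2.1 * (y : ℝ) + f.2.2 }
            (gdistSetA (Adj l) (ecost ch cv cvia) (x, y, z) T) :=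
  stmt11_general l ch cv cvia hch hcv hcvia p q ξ υ hξ hυ T hTne hTcon
end

section
/- Let c be a general-model cost function (depending on tile and direction) on the infinite grid graph G with l layers, let T ⊆ V be nonempty and consistent with the grid, let i ∈ {1, …, p−1}, j ∈ {1, …, q−1}, z ∈ {1, …, l}, and let s = (x, y, z) be a vertex with ξ^i < x < ξ^{i+1} and υ^j < y < υ^{j+1}. Call a vertex (x', y', z') a boundary vertex of the tile if ξ^i ≤ x' ≤ ξ^{i+1}, υ^j ≤ y' ≤ υ^{j+1}, and x' ∈ {ξ^i, ξ^{i+1}} or y' ∈ {υ^j, υ^{j+1}}. If there exists a minimum-cost path from s to T in (G, c) that contains no boundary vertex of the tile, then dist_{(G,c)}(s, T) equals the minimum cost of an s-T-path consisting solely of via edges. -/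
/-- A boundary vertex of the tile with indices `(i, j)`: its x- and y-coordinates lie in the
tile and at least one of them is on the tile boundary (any layer). -/
def BoundaryVtx (ξ υ : ℕ → ℤ) (i j : ℕ) (v : Vtx) : Prop :=
  ξ i ≤ v.1 ∧ v.1 ≤ ξ (i + 1) ∧ υ j ≤ v.2.1 ∧ v.2.1 ≤ υ (j + 1) ∧
    (v.1 = ξ i ∨ v.1 = ξ (i + 1) ∨ v.2.1 = υ j ∨ v.2.1 = υ (j + 1))

/-!
A walk moves one coordinate by one per step, so a walk that starts strictly inside the tile and
avoids its boundary stays strictly inside, where the via between layers `z` and `z + 1` costs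
`cvia i j z`. With `Φ z` the sum of these via costs below layer `z`, every edge inside the tile
costs at least the change of `Φ` along it, so the optimal path `P` from `s` to `v` costs at
least `|Φ v.z - Φ s.z|`. The straight via column from `s` to `(s.x, s.y, v.z)` costs exactly
this, and it ends in `T` because a grid-consistent rectangle meeting the open tile contains it.
-/

theorem Adj.horizontal_or_vertical_or_via_s13 {l : ℤ} {u w : Vtx} (h : Adj l u w) :
    ((w.1 = u.1 + 1 ∨ w.1 = u.1 - 1) ∧ w.2.1 = u.2.1 ∧ w.2.2 = u.2.2) ∨
    (w.1 = u.1 ∧ (w.2.1 = u.2.1 + 1 ∨ w.2.1 = u.2.1 - 1) ∧ w.2.2 = u.2.2) ∨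
    (w.1 = u.1 ∧ w.2.1 = u.2.1 ∧ (w.2.2 = u.2.2 + 1 ∨ w.2.2 = u.2.2 - 1)) := by
  obtain ⟨-, -, -, -, h⟩ := h
  rcases abs_cases (u.1 - w.1) with ⟨h₁, s₁⟩ | ⟨h₁, s₁⟩ <;>
  rcases abs_cases (u.2.1 - w.2.1) with ⟨h₂, s₂⟩ | ⟨h₂, s₂⟩ <;>
  rcases abs_cases (u.2.2 - w.2.2) with ⟨h₃, s₃⟩ | ⟨h₃, s₃⟩ <;>
  rw [h₁, h₂, h₃] at h <;> omega

theorem monotoneOn_Icc_of_le_add_one_s13 {α : Type*} [Preorder α] {p : ℕ} {ξ : ℕ → α}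
    (hξ : ∀ i, 1 ≤ i → i < p → ξ i ≤ ξ (i + 1)) : MonotoneOn ξ (Set.Icc 1 p) :=
  monotoneOn_of_le_add_one Set.ordConnected_Icc fun i _ hi hi' => hξ i hi.1 (by simp at hi'; omega)

theorem inSeg_eq_of_mem_Ioo {p : ℕ} {ξ : ℕ → ℤ} (hmono : MonotoneOn ξ (Set.Icc 1 p))
    {i i' : ℕ} (hi : 1 ≤ i) (hi' : i + 1 ≤ p) (hi'p : i' ≤ p) {x : ℤ}
    (hx : x ∈ Set.Ioo (ξ i) (ξ (i + 1))) (hseg : inSeg p ξ i' x) : i' = i := by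
  obtain ⟨hlo, hhi⟩ := hseg
  obtain ⟨hx₁, hx₂⟩ := hx
  by_contra hne
  rcases Nat.lt_or_gt_of_ne hne with hlt | hgt
  · have : ξ (i' + 1) ≤ ξ i := hmono ⟨by omega, by omega⟩ ⟨hi, by omega⟩ (by omega)
    rcases hhi with h | h <;> omega
  · have : ξ (i + 1) ≤ ξ i' := hmono ⟨by omega, hi'⟩ ⟨by omega, hi'p⟩ hgt
    rcases hlo with h | h <;> omega

theorem le_and_le_of_mem_Ioo {p : ℕ} {ξ : ℕ → ℤ} (hmono : MonotoneOn ξ (Set.Icc 1 p))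
    {a b i : ℕ} (ha : 1 ≤ a) (hab : a ≤ b) (hb : b ≤ p) (hi : 1 ≤ i) (hi' : i + 1 ≤ p) {x : ℤ}
    (hx : x ∈ Set.Ioo (ξ i) (ξ (i + 1))) (hax : ξ a ≤ x) (hxb : x ≤ ξ b) :
    ξ a ≤ ξ i ∧ ξ (i + 1) ≤ ξ b := by
  obtain ⟨hx₁, hx₂⟩ := hx
  constructor
  · rcases le_or_gt a i with h | h
    · exact hmono ⟨ha, by omega⟩ ⟨hi, by omega⟩ h
    · have : ξ (i + 1) ≤ ξ a := hmono ⟨by omega, hi'⟩ ⟨ha, by omega⟩ h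
      omega
  · rcases le_or_gt (i + 1) b with h | h
    · exact hmono ⟨by omega, hi'⟩ ⟨by omega, hb⟩ h
    · have : ξ b ≤ ξ i := hmono ⟨by omega, hb⟩ ⟨hi, by omega⟩ (by omega)
      omega

def InTileInterior (ξ υ : ℕ → ℤ) (i j : ℕ) (v : Vtx) : Prop :=
  v.1 ∈ Set.Ioo (ξ i) (ξ (i + 1)) ∧ v.2.1 ∈ Set.Ioo (υ j) (υ (j + 1))

theorem InTileInterior.of_adj {ξ υ : ℕ → ℤ} {i j : ℕ} {l : ℤ} {u w : Vtx}
    (hu : InTileInterior ξ υ i j u) (hadj : Adj l u w) (hw : ¬ BoundaryVtx ξ υ i j w) :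
    InTileInterior ξ υ i j w := by
  obtain ⟨⟨hx₁, hx₂⟩, hy₁, hy₂⟩ := hu
  simp only [BoundaryVtx, not_and, not_or] at hw
  rcases hadj.horizontal_or_vertical_or_via_s13 with ⟨hx, hy, -⟩ | ⟨hx, hy, -⟩ | ⟨hx, hy, -⟩ <;>
  · have := hw (by omega) (by omega) (by omega) (by omega)
    exact ⟨⟨by omega, by omega⟩, by omega, by omega⟩

section CostModel

variable {p q : ℕ} {ξ υ : ℕ → ℤ} {ch cv cvia : ℕ → ℕ → ℤ → ℝ}

theorem gecost_nonneg {l : ℤ}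
    (hch : ∀ i j z, i ≤ p → j ≤ q → 1 ≤ z → z ≤ l → 0 < ch i j z)
    (hcv : ∀ i j z, i ≤ p → j ≤ q → 1 ≤ z → z ≤ l → 0 < cv i j z)
    (hcvia : ∀ i j z, i ≤ p → j ≤ q → 1 ≤ z → z < l → 0 < cvia i j z)
    {u w : Vtx} (hadj : Adj l u w) : 0 ≤ gecost p q ξ υ ch cv cvia u w := by
  have hdir := hadj.horizontal_or_vertical_or_via_s13
  obtain ⟨hu₁, hu₂, hw₁, hw₂, -⟩ := hadj
  apply Real.sInf_nonneg
  rintro m ⟨i, j, hi, hj, -, -, -, -, rfl⟩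
  split_ifs with hx hy
  · exact (hch i j _ hi hj hu₁ hu₂).le
  · exact (hcv i j _ hi hj hu₁ hu₂).le
  · have hz : w.2.2 = u.2.2 + 1 ∨ w.2.2 = u.2.2 - 1 := by
      rcases hdir with h | h | h <;> omega
    exact (hcvia i j _ hi hj (by omega) (by omega)).le

/-- An interior vertex lies in a single tile, so the infimum defining `gecost` has one term. -/
theorem gecost_of_inTileInterior
    (hξ : ∀ i, 1 ≤ i → i < p → ξ i ≤ ξ (i + 1)) (hυ : ∀ j, 1 ≤ j → j < q → υ j ≤ υ (j + 1))
    {i j : ℕ} (hi : 1 ≤ i) (hi' : i + 1 ≤ p) (hj : 1 ≤ j) (hj' : j + 1 ≤ q) {u w : Vtx}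
    (hu : InTileInterior ξ υ i j u) (hw : InTileInterior ξ υ i j w) (hx : u.1 = w.1)
    (hy : u.2.1 = w.2.1) :
    gecost p q ξ υ ch cv cvia u w = cvia i j (min u.2.2 w.2.2) := by
  obtain ⟨⟨hu₁, hu₂⟩, hu₃, hu₄⟩ := hu
  obtain ⟨⟨hw₁, hw₂⟩, hw₃, hw₄⟩ := hw
  refine IsLeast.csInf_eq ⟨?_, ?_⟩
  · exact ⟨i, j, by omega, by omega, ⟨.inr hu₁.le, .inr hu₂.le⟩, ⟨.inr hw₁.le, .inr hw₂.le⟩,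
      ⟨.inr hu₃.le, .inr hu₄.le⟩, ⟨.inr hw₃.le, .inr hw₄.le⟩, by simp [hx, hy]⟩
  · rintro m ⟨i', j', hi'p, hj'q, hsu, -, htu, -, rfl⟩
    rw [inSeg_eq_of_mem_Ioo (monotoneOn_Icc_of_le_add_one_s13 hξ) hi hi' hi'p ⟨hu₁, hu₂⟩ hsu,
      inSeg_eq_of_mem_Ioo (monotoneOn_Icc_of_le_add_one_s13 hυ) hj hj' hj'q ⟨hu₃, hu₄⟩ htu]
    simp [hx, hy]

end CostModel

theorem mem_of_consistent_of_inTileInterior {p q : ℕ} {ξ υ : ℕ → ℤ} {l : ℤ} {T : Set Vtx}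
    (hξ : ∀ i, 1 ≤ i → i < p → ξ i ≤ ξ (i + 1)) (hυ : ∀ j, 1 ≤ j → j < q → υ j ≤ υ (j + 1))
    (hT : Consistent p q ξ υ l T) {i j : ℕ} (hi : 1 ≤ i) (hi' : i + 1 ≤ p) (hj : 1 ≤ j)
    (hj' : j + 1 ≤ q) {v w : Vtx} (hvT : v ∈ T) (hv : InTileInterior ξ υ i j v)
    (hw : InTileInterior ξ υ i j w) (hz : w.2.2 = v.2.2) : w ∈ T := by
  obtain ⟨R, hR, rfl⟩ := hT
  simp only [Set.mem_iUnion] at hvT ⊢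
  obtain ⟨r, hr, hvx₁, hvx₂, hvy₁, hvy₂, hvz⟩ := hvT
  obtain ⟨h₁, h₂, h₃, h₄, h₅, h₆, -⟩ := hR r hr
  have hx := le_and_le_of_mem_Ioo (monotoneOn_Icc_of_le_add_one_s13 hξ) h₁ h₂ h₃ hi hi' hv.1 hvx₁ hvx₂
  have hy := le_and_le_of_mem_Ioo (monotoneOn_Icc_of_le_add_one_s13 hυ) h₄ h₅ h₆ hj hj' hv.2 hvy₁ hvy₂
  obtain ⟨⟨hw₁, hw₂⟩, hw₃, hw₄⟩ := hw
  exact ⟨r, hr, by omega, by omega, by omega, by omega, hz.trans hvz⟩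

section Walks

variable {A B : Vtx → Vtx → Prop} {P : List Vtx} {u v w : Vtx}

theorem IsWalkA.mono (hAB : ∀ a b, A a b → B a b) (hP : IsWalkA A P u v) : IsWalkA B P u v :=
  ⟨hP.1, List.IsChain.imp hAB hP.2.1, hP.2.2⟩

theorem IsWalkA.cons (h : A w u) (hP : IsWalkA A P u v) : IsWalkA A (w :: P) w v := by
  obtain ⟨hne, hchain, hhead, hlast⟩ := hP
  obtain ⟨b, P, rfl⟩ := List.exists_cons_of_ne_nil hne
  obtain rfl : b = u := by simpa using hhead
  exact ⟨List.cons_ne_nil _ _, List.IsChain.cons_cons h hchain, rfl, by simpa using hlast⟩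

theorem IsWalkA.forall_mem {p : Vtx → Prop} (hP : IsWalkA A P u v) (hu : p u)
    (carries : ∀ a ∈ P, ∀ b ∈ P, A a b → p a → p b) : ∀ w ∈ P, p w := by
  obtain ⟨-, hchain, hhead, -⟩ := hP
  refine (List.IsChain.iff_mem.mp hchain).induction p P
    (fun a b h => carries a h.1 b h.2.1 h.2.2) fun hne => ?_
  rw [List.head?_eq_some_head hne, Option.some.injEq] at hhead
  exact hhead ▸ hu

end Walks

section Telescoping

variable {c : Vtx → Vtx → ℝ} (φ : Vtx → ℝ)

theorem abs_sub_le_wcost : ∀ {P : List Vtx} {u v : Vtx},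
    P.IsChain (fun a b => |φ b - φ a| ≤ c a b) → P.head? = some u → P.getLast? = some v →
      |φ v - φ u| ≤ wcost c P
  | [], _, _, _, hu, _ => by simp at hu
  | [a], _, _, _, hu, hv => by
    obtain rfl : a = _ := by simpa using hu
    obtain rfl : a = _ := by simpa using hv
    simp [wcost]
  | a :: b :: P, u, v, h, hu, hv => by
    obtain rfl : a = u := by simpa using hu
    rw [List.isChain_cons_cons] at h
    have ih := abs_sub_le_wcost h.2 rfl (by simpa using hv)
    have := abs_sub_le (φ v) (φ b) (φ a)
    simp only [wcost]
    linarith [h.1]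

theorem wcost_eq_sub : ∀ {P : List Vtx} {u v : Vtx},
    P.IsChain (fun a b => c a b = φ b - φ a) → P.head? = some u → P.getLast? = some v →
      wcost c P = φ v - φ u
  | [], _, _, _, hu, _ => by simp at hu
  | [a], _, _, _, hu, hv => by
    obtain rfl : a = _ := by simpa using hu
    obtain rfl : a = _ := by simpa using hv
    simp [wcost]
  | a :: b :: P, u, v, h, hu, hv => by
    obtain rfl : a = u := by simpa using hu
    rw [List.isChain_cons_cons] at h
    simp only [wcost]
    rw [h.1, wcost_eq_sub h.2 rfl (by simpa using hv)]
    ring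

end Telescoping

noncomputable def layerPotential (f : ℤ → ℝ) (z : ℤ) : ℝ :=
  ∑ k ∈ Finset.range z.toNat, f k

theorem layerPotential_add_one (f : ℤ → ℝ) {z : ℤ} (hz : 0 ≤ z) :
    layerPotential f (z + 1) = layerPotential f z + f z := by
  rw [layerPotential, layerPotential, show (z + 1).toNat = z.toNat + 1 by omega,
    Finset.sum_range_succ, Int.toNat_of_nonneg hz]

theorem mul_sub_layerPotential (f : ℤ → ℝ) {d z : ℤ} (hd : d = 1 ∨ d = -1) (hz : 0 ≤ z)
    (hzd : 0 ≤ z + d) :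
    d * (layerPotential f (z + d) - layerPotential f z) = f (min z (z + d)) := by
  rcases hd with rfl | rfl
  · rw [layerPotential_add_one f hz, min_eq_left (by omega)]
    push_cast
    ring
  · have h := layerPotential_add_one f hzd
    rw [show z + -1 + 1 = z by ring] at h
    rw [h, min_eq_right (by omega)]
    push_cast
    ring

def ColumnStep (l d : ℤ) (a b : Vtx) : Prop :=
  Adj l a b ∧ b = (a.1, a.2.1, a.2.2 + d)

theorem exists_isWalkA_columnStep {l d : ℤ} (hd : d = 1 ∨ d = -1) (x y : ℤ) (n : ℕ) :
    ∀ z : ℤ, 1 ≤ z → z ≤ l → 1 ≤ z + n * d → z + n * d ≤ l →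
      ∃ Q, IsWalkA (ColumnStep l d) Q (x, y, z) (x, y, z + n * d) := by
  induction n with
  | zero => exact fun z _ _ _ _ => ⟨[(x, y, z)], by simp, .singleton _, by simp, by simp⟩
  | succ n ih =>
    intro z h₁ h₂ h₃ h₄
    push_cast at h₃ h₄ ⊢
    have hd' : 1 ≤ z + d ∧ z + d ≤ l ∧ |d| = 1 := by
      rcases hd with rfl | rfl <;> simp only [mul_one, mul_neg] at h₃ h₄ <;> norm_num <;> omega
    obtain ⟨Q, hQ⟩ := ih (z + d) hd'.1 (by linarith) (by linarith) (by linarith)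
    rw [show z + d + n * d = z + (n + 1) * d by ring] at hQ
    exact ⟨_, hQ.cons ⟨⟨h₁, h₂, hd'.1, hd'.2.1, by simpa using hd'.2.2⟩, rfl⟩⟩

theorem exists_isWalkA_columnStep_of_mem_Icc {l : ℤ} (x y : ℤ) {z z' : ℤ}
    (hz : z ∈ Set.Icc 1 l) (hz' : z' ∈ Set.Icc 1 l) :
    ∃ d : ℤ, (d = 1 ∨ d = -1) ∧ ∃ Q, IsWalkA (ColumnStep l d) Q (x, y, z) (x, y, z') := by
  obtain ⟨h₁, h₂⟩ := hz
  obtain ⟨h₁', h₂'⟩ := hz'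
  rcases le_total z z' with h | h
  · have := exists_isWalkA_columnStep (.inl rfl) x y (z' - z).toNat z h₁ h₂
    rw [Int.toNat_of_nonneg (by omega), mul_one, add_sub_cancel] at this
    exact ⟨1, .inl rfl, this h₁' h₂'⟩
  · have := exists_isWalkA_columnStep (.inr rfl) x y (z - z').toNat z h₁ h₂
    rw [Int.toNat_of_nonneg (by omega), mul_neg_one, neg_sub, add_sub_cancel] at this
    exact ⟨-1, .inr rfl, this h₁' h₂'⟩

section Tile

variable {p q : ℕ} {ξ υ : ℕ → ℤ} {ch cv cvia : ℕ → ℕ → ℤ → ℝ} {l : ℤ} {i j : ℕ}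

theorem abs_sub_layerPotential_le_gecost
    (hξ : ∀ i, 1 ≤ i → i < p → ξ i ≤ ξ (i + 1)) (hυ : ∀ j, 1 ≤ j → j < q → υ j ≤ υ (j + 1))
    (hch : ∀ i j z, i ≤ p → j ≤ q → 1 ≤ z → z ≤ l → 0 < ch i j z)
    (hcv : ∀ i j z, i ≤ p → j ≤ q → 1 ≤ z → z ≤ l → 0 < cv i j z)
    (hcvia : ∀ i j z, i ≤ p → j ≤ q → 1 ≤ z → z < l → 0 < cvia i j z)
    (hi : 1 ≤ i) (hi' : i + 1 ≤ p) (hj : 1 ≤ j) (hj' : j + 1 ≤ q) {u w : Vtx}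
    (hadj : Adj l u w) (hu : InTileInterior ξ υ i j u) (hw : InTileInterior ξ υ i j w) :
    |layerPotential (cvia i j) w.2.2 - layerPotential (cvia i j) u.2.2| ≤
      gecost p q ξ υ ch cv cvia u w := by
  rcases hadj.horizontal_or_vertical_or_via_s13 with ⟨-, -, hz⟩ | ⟨-, -, hz⟩ | ⟨hx, hy, hz⟩
  · rw [hz, sub_self, abs_zero]
    exact gecost_nonneg hch hcv hcvia hadj
  · rw [hz, sub_self, abs_zero]
    exact gecost_nonneg hch hcv hcvia hadj
  · obtain ⟨hu₁, hu₂, hw₁, hw₂, -⟩ := hadj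
    obtain ⟨d, hd, hwz⟩ : ∃ d : ℤ, (d = 1 ∨ d = -1) ∧ w.2.2 = u.2.2 + d :=
      hz.elim (⟨1, .inl rfl, ·⟩) (⟨-1, .inr rfl, ·.trans (sub_eq_add_neg _ _)⟩)
    have hpot := mul_sub_layerPotential (cvia i j) hd (z := u.2.2) (by omega) (by omega)
    have hcost : 0 ≤ cvia i j (min u.2.2 (u.2.2 + d)) :=
      (hcvia i j _ (by omega) (by omega) (by omega) (by omega)).le
    have hd_abs : |(d : ℝ)| = 1 := by rcases hd with rfl | rfl <;> norm_num
    rw [gecost_of_inTileInterior hξ hυ hi hi' hj hj' hu hw hx.symm hy.symm, hwz, ← hpot,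
      ← one_mul |_|, ← hd_abs, ← abs_mul, abs_of_nonneg (hpot ▸ hcost)]

theorem abs_sub_layerPotential_le_wcost
    (hξ : ∀ i, 1 ≤ i → i < p → ξ i ≤ ξ (i + 1)) (hυ : ∀ j, 1 ≤ j → j < q → υ j ≤ υ (j + 1))
    (hch : ∀ i j z, i ≤ p → j ≤ q → 1 ≤ z → z ≤ l → 0 < ch i j z)
    (hcv : ∀ i j z, i ≤ p → j ≤ q → 1 ≤ z → z ≤ l → 0 < cv i j z)
    (hcvia : ∀ i j z, i ≤ p → j ≤ q → 1 ≤ z → z < l → 0 < cvia i j z)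
    (hi : 1 ≤ i) (hi' : i + 1 ≤ p) (hj : 1 ≤ j) (hj' : j + 1 ≤ q) {P : List Vtx} {u v : Vtx}
    (hP : IsWalkA (Adj l) P u v) (hPin : ∀ w ∈ P, InTileInterior ξ υ i j w) :
    |layerPotential (cvia i j) v.2.2 - layerPotential (cvia i j) u.2.2| ≤
      wcost (gecost p q ξ υ ch cv cvia) P :=
  abs_sub_le_wcost (fun w => layerPotential (cvia i j) w.2.2)
    (List.IsChain.imp_of_mem_imp (fun a b ha hb hab => abs_sub_layerPotential_le_gecost
      hξ hυ hch hcv hcvia hi hi' hj hj' hab (hPin a ha) (hPin b hb)) hP.2.1) hP.2.2.1 hP.2.2.2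

theorem wcost_le_of_isWalkA_columnStep
    (hξ : ∀ i, 1 ≤ i → i < p → ξ i ≤ ξ (i + 1)) (hυ : ∀ j, 1 ≤ j → j < q → υ j ≤ υ (j + 1))
    (hi : 1 ≤ i) (hi' : i + 1 ≤ p) (hj : 1 ≤ j) (hj' : j + 1 ≤ q) {d : ℤ} (hd : d = 1 ∨ d = -1)
    {Q : List Vtx} {u w : Vtx} (hQ : IsWalkA (ColumnStep l d) Q u w)
    (hu : InTileInterior ξ υ i j u) :
    wcost (gecost p q ξ υ ch cv cvia) Q ≤
      |layerPotential (cvia i j) w.2.2 - layerPotential (cvia i j) u.2.2| := by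
  have hQin : ∀ a ∈ Q, InTileInterior ξ υ i j a :=
    hQ.forall_mem hu fun a _ b _ hab ha => by rw [hab.2]; exact ha
  have hstep : Q.IsChain fun a b => gecost p q ξ υ ch cv cvia a b =
      d * layerPotential (cvia i j) b.2.2 - d * layerPotential (cvia i j) a.2.2 := by
    refine List.IsChain.imp_of_mem_imp (fun a b ha hb ⟨hab, hb'⟩ => ?_) hQ.2.1
    subst hb'
    obtain ⟨ha₁, -, hb₁, -, -⟩ := hab
    rw [gecost_of_inTileInterior hξ hυ hi hi' hj hj' (hQin a ha) (hQin _ hb) rfl rfl, ← mul_sub,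
      mul_sub_layerPotential _ hd (by omega) (by simp only at hb₁; omega)]
  rw [wcost_eq_sub _ hstep hQ.2.2.1 hQ.2.2.2, ← mul_sub]
  refine (le_abs_self _).trans_eq ?_
  rw [abs_mul]
  rcases hd with rfl | rfl <;> norm_num

end Tile

theorem stmt13_general (l : ℤ) (p q : ℕ) (ξ υ : ℕ → ℤ)
    (hξ : ∀ i, 1 ≤ i → i < p → ξ i ≤ ξ (i + 1)) (hυ : ∀ j, 1 ≤ j → j < q → υ j ≤ υ (j + 1))
    (ch cv cvia : ℕ → ℕ → ℤ → ℝ)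
    (hch : ∀ i j z, i ≤ p → j ≤ q → 1 ≤ z → z ≤ l → 0 < ch i j z)
    (hcv : ∀ i j z, i ≤ p → j ≤ q → 1 ≤ z → z ≤ l → 0 < cv i j z)
    (hcvia : ∀ i j z, i ≤ p → j ≤ q → 1 ≤ z → z < l → 0 < cvia i j z)
    (T : Set Vtx) (hTcon : Consistent p q ξ υ l T)
    (i j : ℕ) (hi : 1 ≤ i) (hi' : i + 1 ≤ p) (hj : 1 ≤ j) (hj' : j + 1 ≤ q)
    (s : Vtx) (hsl : 1 ≤ s.2.2 ∧ s.2.2 ≤ l)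
    (hsx : ξ i < s.1 ∧ s.1 < ξ (i + 1)) (hsy : υ j < s.2.1 ∧ s.2.1 < υ (j + 1))
    (hpath : ∃ (P : List Vtx) (v : Vtx), v ∈ T ∧ IsWalkA (Adj l) P s v ∧
      (∀ (Q : List Vtx) (w : Vtx), w ∈ T → IsWalkA (Adj l) Q s w →
        wcost (gecost p q ξ υ ch cv cvia) P ≤ wcost (gecost p q ξ υ ch cv cvia) Q) ∧
      ∀ u ∈ P, ¬ BoundaryVtx ξ υ i j u) :
    IsLeast
      { m : ℝ | ∃ (Q : List Vtx) (w : Vtx), w ∈ T ∧ IsWalkA (Adj l) Q s w ∧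
          Q.Chain' (fun a b => a.1 = b.1 ∧ a.2.1 = b.2.1) ∧
          wcost (gecost p q ξ υ ch cv cvia) Q = m }
      (gdistSetA (Adj l) (gecost p q ξ υ ch cv cvia) s T) := by
  obtain ⟨P, v, hvT, hP, hPmin, hPbdry⟩ := hpath
  have hs : InTileInterior ξ υ i j s := ⟨hsx, hsy⟩
  have hPin : ∀ w ∈ P, InTileInterior ξ υ i j w :=
    hP.forall_mem hs fun _ _ b hb hab ha => ha.of_adj hab (hPbdry b hb)
  have hvP := List.mem_of_getLast? hP.2.2.2
  have hv := hPin v hvP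
  have hvl : v.2.2 ∈ Set.Icc 1 l :=
    hP.forall_mem (p := fun w => w.2.2 ∈ Set.Icc 1 l) hsl
      (fun _ _ _ _ hab _ => ⟨hab.2.2.1, hab.2.2.2.1⟩) v hvP
  obtain ⟨d, hd, Q, hQ⟩ : ∃ d : ℤ, (d = 1 ∨ d = -1) ∧
      ∃ Q, IsWalkA (ColumnStep l d) Q s (s.1, s.2.1, v.2.2) :=
    exists_isWalkA_columnStep_of_mem_Icc s.1 s.2.1 hsl hvl
  have htT : (s.1, s.2.1, v.2.2) ∈ T :=
    mem_of_consistent_of_inTileInterior hξ hυ hTcon hi hi' hj hj' hvT hv hs rfl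
  have hQP : wcost (gecost p q ξ υ ch cv cvia) Q ≤ wcost (gecost p q ξ υ ch cv cvia) P :=
    calc _ ≤ |layerPotential (cvia i j) v.2.2 - layerPotential (cvia i j) s.2.2| :=
          wcost_le_of_isWalkA_columnStep (w := (s.1, s.2.1, v.2.2))
            hξ hυ hi hi' hj hj' hd hQ hs
      _ ≤ _ := abs_sub_layerPotential_le_wcost hξ hυ hch hcv hcvia hi hi' hj hj' hP hPin
  have hdist : gdistSetA (Adj l) (gecost p q ξ υ ch cv cvia) s T =
      wcost (gecost p q ξ υ ch cv cvia) P :=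
    IsLeast.csInf_eq ⟨⟨P, v, hvT, hP, rfl⟩, fun _ ⟨Q, w, hw, hQ, hm⟩ => hm ▸ hPmin Q w hw hQ⟩
  have hQadj : IsWalkA (Adj l) Q s (s.1, s.2.1, v.2.2) := hQ.mono fun _ _ h => h.1
  have hQvia : Q.IsChain fun a b => a.1 = b.1 ∧ a.2.1 = b.2.1 :=
    List.IsChain.imp (fun _ _ ⟨_, hb⟩ => by rw [hb]; exact ⟨rfl, rfl⟩) hQ.2.1
  rw [hdist]
  exact ⟨⟨Q, _, htT, hQadj, hQvia, le_antisymm hQP (hPmin Q _ htT hQadj)⟩,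
    fun _ ⟨Q, w, hw, hQ, _, hm⟩ => hm ▸ hPmin Q w hw hQ⟩

/-- In the general cost model with `T` consistent with the grid, let `s` be
a vertex strictly inside the tile `(i, j)` with `1 ≤ i ≤ p − 1` and `1 ≤ j ≤ q − 1`.  If some
minimum-cost path from `s` to `T` contains no boundary vertex of the tile, then
`dist (s, T)` equals the minimum cost of an `s`-`T`-path consisting solely of via edges. -/
theorem stmt13 (l : ℤ) (hl : 1 ≤ l) (p q : ℕ) (ξ υ : ℕ → ℤ)
    (hξ : ∀ i, 1 ≤ i → i < p → ξ i ≤ ξ (i + 1)) (hυ : ∀ j, 1 ≤ j → j < q → υ j ≤ υ (j + 1))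
    (ch cv cvia : ℕ → ℕ → ℤ → ℝ)
    (hch : ∀ i j z, i ≤ p → j ≤ q → 1 ≤ z → z ≤ l → 0 < ch i j z)
    (hcv : ∀ i j z, i ≤ p → j ≤ q → 1 ≤ z → z ≤ l → 0 < cv i j z)
    (hcvia : ∀ i j z, i ≤ p → j ≤ q → 1 ≤ z → z < l → 0 < cvia i j z)
    (T : Set Vtx) (hTne : T.Nonempty) (hTcon : Consistent p q ξ υ l T)
    (i j : ℕ) (hi : 1 ≤ i) (hi' : i + 1 ≤ p) (hj : 1 ≤ j) (hj' : j + 1 ≤ q)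
    (s : Vtx) (hsl : 1 ≤ s.2.2 ∧ s.2.2 ≤ l)
    (hsx : ξ i < s.1 ∧ s.1 < ξ (i + 1)) (hsy : υ j < s.2.1 ∧ s.2.1 < υ (j + 1))
    (hpath : ∃ (P : List Vtx) (v : Vtx), v ∈ T ∧ IsWalkA (Adj l) P s v ∧
      (∀ (Q : List Vtx) (w : Vtx), w ∈ T → IsWalkA (Adj l) Q s w →
        wcost (gecost p q ξ υ ch cv cvia) P ≤ wcost (gecost p q ξ υ ch cv cvia) Q) ∧
      ∀ u ∈ P, ¬ BoundaryVtx ξ υ i j u) :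
    IsLeast
      { m : ℝ | ∃ (Q : List Vtx) (w : Vtx), w ∈ T ∧ IsWalkA (Adj l) Q s w ∧
          Q.Chain' (fun a b => a.1 = b.1 ∧ a.2.1 = b.2.1) ∧
          wcost (gecost p q ξ υ ch cv cvia) Q = m }
      (gdistSetA (Adj l) (gecost p q ξ υ ch cv cvia) s T) :=
  stmt13_general l p q ξ υ hξ hυ ch cv cvia hch hcv hcvia T hTcon i j hi hi' hj hj' s hsl hsx hsy
    hpath
end
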